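/- arXiv:2209.01925 — 8 statements merged into one kernel-verified Lean document; each statement's English description precedes it below -/
import Mathlib

section
/- Let κ be a regular uncountable cardinal, Λ a κ-directed partial order, and T a Λ-tree such that |T_u| < κ for every u in some cofinal subset Y of Λ. Then T has a well-pruned subtree, i.e., a subtree T' with all levels nonempty such that for all u <_Λ v and every s ∈ T'_u there exists t ∈ T'_v with s <_{T'} t. -/
open Cardinal

universe u

/-- A `Λ`-tree: a family of nonempty pairwise disjoint levels indexed by a partial order `Λ`,
with a transitive tree-like ordering `lt` respecting the levels and admitting unique
restrictions. -/
structure LamTree (Λ : Type u) [PartialOrder Λ] (α : Type u) where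
  lev : Λ → Set α
  lt : α → α → Prop
  nonempty : ∀ u : Λ, (lev u).Nonempty
  disj : ∀ u v : Λ, u ≠ v → Disjoint (lev u) (lev v)
  trans : ∀ {a b c : α}, lt a b → lt b c → lt a c
  respects : ∀ {u v : Λ} {s t : α}, s ∈ lev u → t ∈ lev v → lt s t → u < v
  treelike : ∀ {u v w : Λ} {r s t : α}, u < v → v < w → r ∈ lev u → s ∈ lev v → t ∈ lev w →
    lt r t → lt s t → lt r s
  restrict : ∀ {u v : Λ} (t : α), u ≤ v → t ∈ lev v → ∃! s : α, s ∈ lev u ∧ (lt s t ∨ s = t)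

/-- `Λ` is `κ`-directed: every subset of size `< κ` has an upper bound. -/
def DirectedBelow (κ : Cardinal.{u}) (Λ : Type u) [PartialOrder Λ] : Prop :=
  ∀ S : Set Λ, #S < κ → ∃ ub : Λ, ∀ u ∈ S, u ≤ ub

namespace LamTree

variable {Λ α : Type u} [PartialOrder Λ]

/-- Non-strict tree order. -/
def le' (T : LamTree Λ α) (s t : α) : Prop := T.lt s t ∨ s = t

lemma le'_trans (T : LamTree Λ α) {a b c : α} (h1 : T.le' a b) (h2 : T.le' b c) :
    T.le' a c := by
  rcases h1 with h1 | rfl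
  · rcases h2 with h2 | rfl
    · exact Or.inl (T.trans h1 h2)
    · exact Or.inl h1
  · exact h2

lemma helper (T : LamTree Λ α) {u w z : Λ} {s p r : α}
    (huw : u ≤ w) (hwz : w ≤ z) (hs : s ∈ T.lev u) (hp : p ∈ T.lev w) (hr : r ∈ T.lev z)
    (hsr : T.le' s r) (hpr : T.le' p r) : T.le' s p := by
  obtain ⟨q, ⟨hq, hqp⟩, _⟩ := T.restrict p huw hp
  have hqr : T.le' q r := T.le'_trans hqp hpr
  obtain ⟨x, _, hx⟩ := T.restrict r (huw.trans hwz) hr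
  have h1 := hx s ⟨hs, hsr⟩
  have h2 := hx q ⟨hq, hqr⟩
  rw [h1, ← h2]
  exact hqp

lemma core (κ : Cardinal.{u}) (hreg : κ.IsRegular) (hunc : Cardinal.aleph0 < κ)
    (hdir : DirectedBelow κ Λ) (T : LamTree Λ α) {y : Λ} (hy : #(T.lev y) < κ)
    (C : α → Prop)
    (hC1 : ∀ w, y ≤ w → ∃ t ∈ T.lev w, C t)
    (hC2 : ∀ {w z : Λ} {t p : α}, y ≤ w → w ≤ z → t ∈ T.lev z → C t → p ∈ T.lev w →
      T.le' p t → C p) :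
    ∃ p ∈ T.lev y, C p ∧ ∀ v, y ≤ v → ∃ t ∈ T.lev v, T.le' p t := by
  classical
  let f : α → Λ := fun p =>
    if h : ∃ w', y ≤ w' ∧ ∀ t' ∈ T.lev w', ¬ T.le' p t' then h.choose else y
  have hScard : #(insert y (f '' T.lev y) : Set Λ) < κ := by
    calc #(insert y (f '' T.lev y) : Set Λ) ≤ #(f '' T.lev y) + 1 := Cardinal.mk_insert_le
    _ ≤ #(T.lev y) + 1 := by gcongr; exact Cardinal.mk_image_le
    _ < κ := Cardinal.add_lt_of_lt hreg.aleph0_le hy (lt_trans one_lt_aleph0 hunc)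
  obtain ⟨w, hw⟩ := hdir _ hScard
  have hyw : y ≤ w := hw y (Set.mem_insert _ _)
  obtain ⟨t, htw, hCt⟩ := hC1 w hyw
  obtain ⟨p, ⟨hpy, hpt⟩, _⟩ := T.restrict t hyw htw
  refine ⟨p, hpy, hC2 le_rfl hyw htw hCt hpy hpt, ?_⟩
  by_contra hnv
  push_neg at hnv
  obtain ⟨v, hyv, hvfail⟩ := hnv
  have hex : ∃ w', y ≤ w' ∧ ∀ t' ∈ T.lev w', ¬ T.le' p t' := ⟨v, hyv, hvfail⟩
  obtain ⟨hyc, hfail⟩ := hex.choose_spec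
  have hfpw : hex.choose ≤ w := by
    have : f p = hex.choose := dif_pos hex
    rw [← this]
    exact hw (f p) (Set.mem_insert_of_mem _ ⟨p, hpy, rfl⟩)
  obtain ⟨r, ⟨hr, hrt⟩, _⟩ := T.restrict t hfpw htw
  exact hfail r hr (T.helper hyc hfpw hpy hr htw hpt hrt)

end LamTree

/-- If `κ` is regular uncountable, `Λ` is `κ`-directed, and `T` is a `Λ`-tree whose levels
indexed by a cofinal set `Y ⊆ Λ` have size `< κ`, then `T` has a well-pruned subtree. -/
theorem stmt0 {Λ α : Type u} [PartialOrder Λ] (κ : Cardinal.{u})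
    (hreg : κ.IsRegular) (hunc : Cardinal.aleph0 < κ)
    (hdir : DirectedBelow κ Λ) (T : LamTree Λ α) (Y : Set Λ)
    (hYcof : ∀ u : Λ, ∃ v ∈ Y, u ≤ v)
    (hthin : ∀ u ∈ Y, #(T.lev u) < κ) :
    ∃ T' : Λ → Set α,
      (∀ u : Λ, T' u ⊆ T.lev u) ∧
      (∀ u : Λ, (T' u).Nonempty) ∧
      (∀ (u v : Λ) (t s : α), u ≤ v → t ∈ T' v → s ∈ T.lev u → (T.lt s t ∨ s = t) → s ∈ T' u) ∧
      (∀ u v : Λ, u < v → ∀ s ∈ T' u, ∃ t ∈ T' v, T.lt s t) := by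
  classical
  set T' : Λ → Set α :=
    fun u => {s ∈ T.lev u | ∀ v, u ≤ v → ∃ t ∈ T.lev v, T.le' s t} with hT'
  have hsub : ∀ u, T' u ⊆ T.lev u := fun u s hs => hs.1
  have hpair : ∀ a b : Λ, ∃ z : Λ, a ≤ z ∧ b ≤ z := by
    intro a b
    obtain ⟨z, hz⟩ := hdir {a, b}
      (lt_trans (((Set.finite_singleton b).insert a).lt_aleph0) hunc)
    exact ⟨z, hz a (by simp), hz b (by simp)⟩
  have hdc : ∀ (u v : Λ) (t s : α), u ≤ v → t ∈ T' v → s ∈ T.lev u → T.le' s t → s ∈ T' u := by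
    intro u v t s huv ht hs hst
    refine ⟨hs, fun w huw => ?_⟩
    obtain ⟨z, hvz, hwz⟩ := hpair v w
    obtain ⟨t', ht'z, htt'⟩ := ht.2 z hvz
    obtain ⟨p, ⟨hpw, hpt'⟩, _⟩ := T.restrict t' hwz ht'z
    exact ⟨p, hpw, T.helper huw hwz hs hpw ht'z (T.le'_trans hst htt') hpt'⟩
  have hne : ∀ u, (T' u).Nonempty := by
    intro u
    obtain ⟨y, hyY, huy⟩ := hYcof u
    obtain ⟨p, hpy, -, hpv⟩ := LamTree.core κ hreg hunc hdir T (hthin y hyY) (fun _ => True)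
      (fun w hyw => (T.nonempty w).imp fun t ht => ⟨ht, trivial⟩)
      (fun _ _ _ _ _ _ => trivial)
    obtain ⟨s, ⟨hsu, hsp⟩, _⟩ := T.restrict p huy hpy
    exact ⟨s, hdc u y p s huy ⟨hpy, hpv⟩ hsu hsp⟩
  refine ⟨T', hsub, hne, fun u v t s huv ht hs h => hdc u v t s huv ht hs h, ?_⟩
  intro u v huv s hs
  obtain ⟨y, hyY, hvy⟩ := hYcof v
  have huy : u ≤ y := huv.le.trans hvy
  obtain ⟨p, hpy, hsp, hpv⟩ := LamTree.core κ hreg hunc hdir T (hthin y hyY) (T.le' s)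
    (fun w hyw => hs.2 w (huy.trans hyw))
    (fun {w z t' p'} hyw hwz ht' hC hp' hle =>
      T.helper (huy.trans hyw) hwz hs.1 hp' ht' hC hle)
  obtain ⟨q, ⟨hqv, hqp⟩, _⟩ := T.restrict p hvy hpy
  have hsq : T.le' s q := T.helper huv.le hvy hs.1 hqv hpy hsp hqp
  have hq' : q ∈ T' v := hdc v y p q hvy ⟨hpy, hpv⟩ hqv hqp
  refine ⟨q, hq', ?_⟩
  rcases hsq with h | rfl
  · exact h
  · exact absurd hqv (Set.disjoint_left.mp (T.disj u v huv.ne) hs.1)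
end

section
/- Suppose T is a Λ-tree of width μ (i.e., μ is the least cardinal with |T_u| < μ for all u ∈ Λ) and Λ is μ⁺-directed. Then μ is a successor cardinal; that is, there exists a cardinal ν < μ with |T_u| ≤ ν for all u ∈ Λ. -/
open Cardinal

universe u

/-- Levels are monotone in cardinality for a well-pruned tree. -/
theorem lev_mono {Λ α : Type u} [PartialOrder Λ] (T : LamTree Λ α)
    (hpruned : ∀ u v : Λ, u < v → ∀ s ∈ T.lev u, ∃ t ∈ T.lev v, T.lt s t)
    {u v : Λ} (huv : u ≤ v) : #(T.lev u) ≤ #(T.lev v) := by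
  rcases eq_or_lt_of_le huv with rfl | hlt
  · exact le_rfl
  · -- restriction map from level v to level u, surjective by pruning
    apply Cardinal.mk_le_of_surjective
      (f := fun t : T.lev v => (⟨(T.restrict t.1 huv t.2).choose,
        (T.restrict t.1 huv t.2).choose_spec.1.1⟩ : T.lev u))
    rintro ⟨s, hs⟩
    obtain ⟨t, ht, hst⟩ := hpruned u v hlt s hs
    refine ⟨⟨t, ht⟩, ?_⟩
    have huniq := (T.restrict t huv ht).choose_spec.2 s ⟨hs, Or.inl hst⟩
    exact Subtype.ext huniq.symm

/-- If `T` is a well-pruned `Λ`-tree of width `μ` (i.e. `μ` is least with all levels of size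
`< μ`) and `Λ` is `μ⁺`-directed, then `μ` is a successor: there is `ν < μ` bounding all levels. -/
theorem stmt1 {Λ α : Type u} [PartialOrder Λ] (μ : Cardinal.{u}) (T : LamTree Λ α)
    (hpruned : ∀ u v : Λ, u < v → ∀ s ∈ T.lev u, ∃ t ∈ T.lev v, T.lt s t)
    (hwidth : ∀ u : Λ, #(T.lev u) < μ)
    (hleast : ∀ μ' : Cardinal.{u}, (∀ u : Λ, #(T.lev u) < μ') → μ ≤ μ')
    (hdir : DirectedBelow (Order.succ μ) Λ) :
    ∃ ν : Cardinal.{u}, ν < μ ∧ ∀ u : Λ, #(T.lev u) ≤ ν := by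
  by_contra hcon
  push_neg at hcon
  -- for every ν < μ there is a level of size > ν
  have hbig : ∀ ν : Cardinal.{u}, ν < μ → ∃ u : Λ, ν < #(T.lev u) := hcon
  haveI : IsWellOrder μ.ord.ToType (· < ·) := isWellOrder_lt
  have hf : ∀ q : μ.ord.ToType, ∃ u : Λ, (Ordinal.typein (α := μ.ord.ToType) (· < ·) q).card < #(T.lev u) := by
    intro q
    apply hbig
    rw [← Cardinal.lt_ord]
    exact Ordinal.typein_lt_self q
  choose f hfspec using hf
  have hS : #(Set.range f) < Order.succ μ := by
    rw [Order.lt_succ_iff]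
    calc #(Set.range f) ≤ #μ.ord.ToType := Cardinal.mk_range_le
    _ = μ := by rw [Cardinal.mk_toType, Cardinal.card_ord]
  obtain ⟨ub, hub⟩ := hdir (Set.range f) hS
  -- every ν < μ is below the size of level ub
  have hdom : ∀ ν : Cardinal.{u}, ν < μ → ν < #(T.lev ub) := by
    intro ν hν
    have hord : ν.ord < Ordinal.type (α := μ.ord.ToType) (· < ·) := by
      rw [Ordinal.type_toType]
      exact Cardinal.ord_lt_ord.2 hν
    obtain ⟨q, hq⟩ := Ordinal.typein_surj (α := μ.ord.ToType) (· < ·) hord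
    have h1 : ν < #(T.lev (f q)) := by
      have := hfspec q
      rwa [hq, Cardinal.card_ord] at this
    exact h1.trans_le (lev_mono T hpruned (hub (f q) (Set.mem_range_self q)))
  exact absurd (hdom _ (hwidth ub)) (lt_irrefl _)
end

section
/- Suppose T is a very thin Λ-tree, i.e., Λ is width(T)⁺-directed where width(T) is the least cardinal μ with |T_u| < μ for all u ∈ Λ. Then T has a cofinal branch: a function b ∈ ∏_{u ∈ Λ} T_u such that b(u) <_T b(v) whenever u <_Λ v. -/
open Cardinal

universe u

/-!
Call `s ∈ T_u` persistent if it is a restriction of elements of every higher level. As `T_u` has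
fewer than `μ` elements, `μ⁺`-directedness gives one level `w ≥ u` all of whose restrictions to
`u` are persistent; hence every level has persistent elements, and restriction maps the persistent
elements of `v ≥ u` onto those of `u`. Call `u₀` stable if restriction to `u₀` is injective on the
persistent elements of every higher level. Above a stable `u₀` the unique persistent lifts of one
persistent element of `u₀` cohere into a branch. For finite `μ`, a level with the most persistent
elements is stable. For infinite `μ`, if no level were stable, a chain of length `μ` of levels at
which persistent elements split, bounded by one level `w`, would give `μ` distinct pairs in
`T_w × T_w`, a set of size `< μ`.
-/

theorem exists_forall_lt_map_le {ι Λ : Type*} [Preorder ι] [WellFoundedLT ι] [Preorder Λ]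
    (hbdd : ∀ x : ι, ∀ f : Set.Iio x → Λ, BddAbove (Set.range f)) (F : Λ → Λ) :
    ∃ c : ι → Λ, ∀ x y, x < y → F (c x) ≤ c y := by
  choose step hstep using fun x (ih : ∀ y < x, Λ) => hbdd x fun y => F (ih y y.2)
  refine ⟨wellFounded_lt.fix step, fun x y hxy => ?_⟩
  rw [wellFounded_lt.fix_eq step y]
  exact hstep y _ ⟨⟨x, hxy⟩, rfl⟩

namespace LamTree

variable {Λ α : Type u} [PartialOrder Λ] (T : LamTree Λ α)

open Classical in
/-- The restriction `t↾u`; a junk value unless `t` lies on a level above `u`. -/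
noncomputable def res (u : Λ) (t : α) : α :=
  if h : ∃ v, u ≤ v ∧ t ∈ T.lev v then
    (T.restrict t h.choose_spec.1 h.choose_spec.2).exists.choose
  else t

def IsThread (b : Λ → α) : Prop :=
  (∀ u, b u ∈ T.lev u) ∧ ∀ ⦃u v⦄, u ≤ v → T.res u (b v) = b u

def persistent (u : Λ) : Set α :=
  {s | s ∈ T.lev u ∧ ∀ v, u ≤ v → ∃ t ∈ T.lev v, T.res u t = s}

def IsStable (u₀ : Λ) : Prop :=
  ∀ v, u₀ ≤ v → Set.InjOn (T.res u₀) (T.persistent v)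

variable {T} {u v w : Λ} {s t : α}

theorem res_spec (huv : u ≤ v) (ht : t ∈ T.lev v) :
    T.res u t ∈ T.lev u ∧ (T.lt (T.res u t) t ∨ T.res u t = t) := by
  have h : ∃ v, u ≤ v ∧ t ∈ T.lev v := ⟨v, huv, ht⟩
  classical
  rw [res, dif_pos h]
  exact (T.restrict t h.choose_spec.1 h.choose_spec.2).exists.choose_spec

theorem res_mem (huv : u ≤ v) (ht : t ∈ T.lev v) : T.res u t ∈ T.lev u :=
  (res_spec huv ht).1

theorem eq_res (huv : u ≤ v) (ht : t ∈ T.lev v) (hs : s ∈ T.lev u) (hst : T.lt s t ∨ s = t) :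
    s = T.res u t :=
  (T.restrict t huv ht).unique ⟨hs, hst⟩ (res_spec huv ht)

theorem eq_of_mem_lev (hu : t ∈ T.lev u) (hv : t ∈ T.lev v) : u = v := by
  by_contra hne
  exact Set.disjoint_left.1 (T.disj u v hne) hu hv

theorem res_self (ht : t ∈ T.lev u) : T.res u t = t :=
  (eq_res le_rfl ht ht (Or.inr rfl)).symm

theorem res_lt (huv : u < v) (ht : t ∈ T.lev v) : T.lt (T.res u t) t := by
  refine (res_spec huv.le ht).2.resolve_right fun h => huv.ne ?_
  exact eq_of_mem_lev (h ▸ res_mem huv.le ht) ht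

theorem res_res (huv : u ≤ v) (hvw : v ≤ w) (ht : t ∈ T.lev w) :
    T.res u (T.res v t) = T.res u t := by
  obtain rfl | hvw := hvw.eq_or_lt
  · rw [res_self ht]
  obtain rfl | huv := huv.eq_or_lt
  · exact res_self (res_mem hvw.le ht)
  have huw := (huv.trans hvw).le
  refine (eq_res huv.le (res_mem hvw.le ht) (res_mem huw ht) (Or.inl ?_)).symm
  exact T.treelike huv hvw (res_mem huw ht) (res_mem hvw.le ht) ht (res_lt (huv.trans hvw) ht)
    (res_lt hvw ht)

theorem res_eq_res_of_le {a b : α} (huv : u ≤ v) (hvw : v ≤ w) (ha : a ∈ T.lev w)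
    (hb : b ∈ T.lev w) (h : T.res v a = T.res v b) : T.res u a = T.res u b := by
  rw [← res_res huv hvw ha, h, res_res huv hvw hb]

theorem IsThread.lt {b : Λ → α} (hb : T.IsThread b) (huv : u < v) : T.lt (b u) (b v) :=
  hb.2 huv.le ▸ res_lt huv (hb.1 v)

section Directed

variable [IsDirected Λ (· ≤ ·)]

theorem exists_isThread_of_ge (u₀ : Λ) (r : Λ → α) (hr : ∀ w, u₀ ≤ w → r w ∈ T.lev w)
    (hcoh : ∀ w w', u₀ ≤ w → w ≤ w' → T.res w (r w') = r w) : ∃ b, T.IsThread b := by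
  choose W hvW hu₀W using fun v => exists_ge_ge v u₀
  have hres : ∀ v w, v ≤ w → u₀ ≤ w → T.res v (r w) = T.res v (r (W v)) := by
    intro v w hvw hu₀w
    obtain ⟨w', hww', hWw'⟩ := exists_ge_ge w (W v)
    have hw' := hr w' (hu₀w.trans hww')
    rw [← hcoh w w' hu₀w hww', ← hcoh (W v) w' (hu₀W v) hWw', res_res hvw hww' hw',
      res_res (hvW v) hWw' hw']
  refine ⟨fun v => T.res v (r (W v)), fun v => res_mem (hvW v) (hr _ (hu₀W v)), ?_⟩
  intro u v huv
  rw [res_res huv (hvW v) (hr _ (hu₀W v)), hres u (W v) (huv.trans (hvW v)) (hu₀W v)]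

theorem res_mem_persistent (hs : s ∈ T.persistent v) (huv : u ≤ v) :
    T.res u s ∈ T.persistent u := by
  refine ⟨res_mem huv hs.1, fun w huw => ?_⟩
  obtain ⟨w', hvw', hww'⟩ := exists_ge_ge v w
  obtain ⟨t, ht, rfl⟩ := hs.2 w' hvw'
  exact ⟨T.res w t, res_mem hww' ht, by rw [res_res huw hww' ht, res_res huv hvw' ht]⟩

end Directed

section VeryThin

variable {μ : Cardinal.{u}} (hwidth : ∀ u : Λ, #(T.lev u) < μ)
  (hdir : DirectedBelow (Order.succ μ) Λ)
include hwidth hdir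

theorem isDirected_le : IsDirected Λ (· ≤ ·) := by
  refine ⟨fun a b => ?_⟩
  have hμ : 1 < μ := by
    have := (T.nonempty a).to_subtype
    exact (Cardinal.one_le_iff_ne_zero.2 (mk_ne_zero _)).trans_lt (hwidth a)
  have hpair : #({a, b} : Set Λ) < Order.succ μ := calc
    #({a, b} : Set Λ) ≤ 1 + 1 := mk_insert_le.trans (by rw [mk_singleton])
    _ ≤ μ := add_one_le_of_lt hμ
    _ < Order.succ μ := Order.lt_succ μ
  obtain ⟨w, hw⟩ := hdir _ hpair
  exact ⟨w, hw a (by simp), hw b (by simp)⟩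

theorem exists_ge_res_mem_persistent (u : Λ) :
    ∃ w, u ≤ w ∧ ∀ t ∈ T.lev w, T.res u t ∈ T.persistent u := by
  have hkill : ∀ s : T.lev u, ∃ v, u ≤ v ∧ ∀ t ∈ T.lev v, T.res u t = s →
      (s : α) ∈ T.persistent u := by
    intro s
    by_cases hs : (s : α) ∈ T.persistent u
    · exact ⟨u, le_rfl, fun _ _ _ => hs⟩
    · obtain ⟨v, huv, hv⟩ : ∃ v, u ≤ v ∧ ∀ t ∈ T.lev v, T.res u t ≠ s := by
        simpa [persistent, s.2] using hs
      exact ⟨v, huv, fun t ht hts => absurd hts (hv t ht)⟩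
  choose f huf hf using hkill
  obtain ⟨w, hw⟩ := hdir (Set.range f) (mk_range_le.trans_lt ((hwidth u).trans (Order.lt_succ μ)))
  have hfw : ∀ s, f s ≤ w := fun s => hw _ ⟨s, rfl⟩
  obtain ⟨s₀, hs₀⟩ := T.nonempty u
  have huw := (huf ⟨s₀, hs₀⟩).trans (hfw _)
  refine ⟨w, huw, fun t ht => ?_⟩
  let s : T.lev u := ⟨T.res u t, res_mem huw ht⟩
  exact hf s _ (res_mem (hfw s) ht) (res_res (huf s) (hfw s) ht)

theorem persistent_nonempty (u : Λ) : (T.persistent u).Nonempty := by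
  obtain ⟨w, -, hw⟩ := exists_ge_res_mem_persistent hwidth hdir u
  obtain ⟨t, ht⟩ := T.nonempty w
  exact ⟨_, hw t ht⟩

theorem exists_mem_persistent_res_eq (hs : s ∈ T.persistent u) (huv : u ≤ v) :
    ∃ r ∈ T.persistent v, T.res u r = s := by
  obtain ⟨w, hvw, hw⟩ := exists_ge_res_mem_persistent hwidth hdir v
  obtain ⟨t, ht, rfl⟩ := hs.2 w (huv.trans hvw)
  exact ⟨T.res v t, hw t ht, res_res huv hvw ht⟩

theorem exists_isThread_of_isStable {u₀ : Λ} (hu₀ : T.IsStable u₀) : ∃ b, T.IsThread b := by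
  have := isDirected_le hwidth hdir
  obtain ⟨s₀, hs₀⟩ := persistent_nonempty hwidth hdir u₀
  have : Nonempty α := ⟨s₀⟩
  choose! r hr hrs using fun w (h : u₀ ≤ w) => exists_mem_persistent_res_eq hwidth hdir hs₀ h
  refine exists_isThread_of_ge u₀ r (fun w h => (hr w h).1) fun w w' h hww' => ?_
  have h' := h.trans hww'
  refine hu₀ w h (res_mem_persistent (hr w' h') hww') (hr w h) ?_
  rw [res_res h hww' (hr w' h').1, hrs w' h', hrs w h]

theorem exists_isStable_of_lt_aleph0 (hμ : μ < ℵ₀) : ∃ u₀, T.IsStable u₀ := by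
  have := isDirected_le hwidth hdir
  have hfin : ∀ u, (T.persistent u).Finite := fun u =>
    (lt_aleph0_iff_set_finite.1 ((hwidth u).trans hμ)).subset fun _ hs => hs.1
  have hbdd : BddAbove (Set.range fun u => (T.persistent u).ncard) := by
    refine ⟨μ.toNat, ?_⟩
    rintro _ ⟨u, rfl⟩
    exact toNat_le_toNat ((mk_le_mk_of_subset fun _ hs => hs.1).trans (hwidth u).le) hμ
  obtain ⟨u, -⟩ := hdir ∅ (by simp)
  obtain ⟨u₀, hu₀ : (T.persistent u₀).ncard = _⟩ :=
    Nat.sSup_mem (Set.range_nonempty_iff_nonempty.2 ⟨u⟩) hbdd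
  refine ⟨u₀, fun v huv => Set.injOn_of_ncard_image_eq ?_ (hfin v)⟩
  have himage : T.res u₀ '' T.persistent v = T.persistent u₀ := by
    refine subset_antisymm (Set.image_subset_iff.2 fun s hs => res_mem_persistent hs huv) ?_
    exact fun s hs => exists_mem_persistent_res_eq hwidth hdir hs huv
  refine (Set.ncard_image_le (hfin v)).antisymm ?_
  rw [himage, hu₀]
  exact le_csSup hbdd ⟨v, rfl⟩

theorem exists_isStable_of_aleph0_le (hμ : ℵ₀ ≤ μ) : ∃ u₀, T.IsStable u₀ := by
  by_contra! hsplit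
  simp only [IsStable, Set.InjOn, not_forall] at hsplit
  choose F hF a ha b hb hab hne using hsplit
  obtain ⟨c, hc⟩ := exists_forall_lt_map_le (ι := μ.ord.ToType) (fun x f => hdir _
    (mk_range_le.trans_lt ((mk_Iio_lt x (by simp)).trans_le (by simp [Order.le_succ])))) F
  obtain ⟨top, htop⟩ := hdir (Set.range fun x => F (c x))
    (mk_range_le.trans_lt (by simp))
  have hle : ∀ x, F (c x) ≤ top := fun x => htop _ ⟨x, rfl⟩
  choose g₁ hg₁ hg₁a using fun x => (ha (c x)).2 top (hle x)
  choose g₂ hg₂ hg₂b using fun x => (hb (c x)).2 top (hle x)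
  have hagree : ∀ y, T.res (c y) (g₁ y) = T.res (c y) (g₂ y) := fun y => by
    rw [← res_res (hF (c y)) (hle y) (hg₁ y), ← res_res (hF (c y)) (hle y) (hg₂ y), hg₁a, hg₂b,
      hab]
  let φ : μ.ord.ToType → T.lev top × T.lev top := fun x => (⟨g₁ x, hg₁ x⟩, ⟨g₂ x, hg₂ x⟩)
  -- the pair of `x` splits at `F (c x) ≤ c y`, where the pair of `y` agrees
  have hφ : Function.Injective φ := by
    refine Function.Injective.of_lt_imp_ne fun x y hxy hφxy => hne (c x) ?_
    have h₁ : g₁ x = g₁ y := congrArg (fun p => (p.1 : α)) hφxy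
    have h₂ : g₂ x = g₂ y := congrArg (fun p => (p.2 : α)) hφxy
    rw [← hg₁a x, ← hg₂b x, h₁, h₂]
    exact res_eq_res_of_le (hc x y hxy) ((hF (c y)).trans (hle y)) (hg₁ y) (hg₂ y) (hagree y)
  have hcard := mk_le_of_injective hφ
  rw [mk_ord_toType, mk_prod, lift_id] at hcard
  exact hcard.not_gt (mul_lt_of_lt hμ (hwidth top) (hwidth top))

end VeryThin

end LamTree

theorem stmt2_general {Λ α : Type u} [PartialOrder Λ] (μ : Cardinal.{u}) (T : LamTree Λ α)
    (hwidth : ∀ u : Λ, #(T.lev u) < μ)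
    (hdir : DirectedBelow (Order.succ μ) Λ) :
    ∃ b : Λ → α, (∀ u : Λ, b u ∈ T.lev u) ∧ ∀ u v : Λ, u < v → T.lt (b u) (b v) := by
  obtain ⟨u₀, hu₀⟩ := (lt_or_ge μ ℵ₀).elim (T.exists_isStable_of_lt_aleph0 hwidth hdir)
    (T.exists_isStable_of_aleph0_le hwidth hdir)
  obtain ⟨b, hb⟩ := T.exists_isThread_of_isStable hwidth hdir hu₀
  exact ⟨b, hb.1, fun _ _ => hb.lt⟩

/-- A very thin `Λ`-tree (one whose width `μ` satisfies that `Λ` is `μ⁺`-directed)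
has a cofinal branch. -/
theorem stmt2 {Λ α : Type u} [PartialOrder Λ] (μ : Cardinal.{u}) (T : LamTree Λ α)
    (hwidth : ∀ u : Λ, #(T.lev u) < μ)
    (hleast : ∀ μ' : Cardinal.{u}, (∀ u : Λ, #(T.lev u) < μ') → μ ≤ μ')
    (hdir : DirectedBelow (Order.succ μ) Λ) :
    ∃ b : Λ → α, (∀ u : Λ, b u ∈ T.lev u) ∧ ∀ u v : Λ, u < v → T.lt (b u) (b v) :=
  stmt2_general μ T hwidth hdir
end

section
/- If κ is a strongly compact cardinal and Λ is a κ-directed partial order, then every κ-Λ-tree (a Λ-tree all of whose levels have size < κ) has a cofinal branch. -/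
open Cardinal

universe u

/-- `κ` is strongly compact: it is regular uncountable and for every set `X` of size `≥ κ`
there is a fine `κ`-complete ultrafilter on `P_κ(X)`. -/
def IsStronglyCompact (κ : Cardinal.{u}) : Prop :=
  Cardinal.aleph0 < κ ∧ κ.IsRegular ∧
    ∀ X : Type u, κ ≤ #X →
      ∃ U : Ultrafilter {s : Set X // #s < κ},
        (∀ x : X, {s : {s : Set X // #s < κ} | x ∈ s.1} ∈ U) ∧
        (∀ I : Set (Set {s : Set X // #s < κ}), #I < κ → (∀ A ∈ I, A ∈ U) →
          ⋂₀ I ∈ (U : Filter _))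

/-- If `κ` is strongly compact and `Λ` is `κ`-directed, then every `κ`-`Λ`-tree
has a cofinal branch. -/
theorem stmt3 {Λ α : Type u} [PartialOrder Λ] (κ : Cardinal.{u})
    (hsc : IsStronglyCompact κ) (hdir : DirectedBelow κ Λ)
    (T : LamTree Λ α) (hwidth : ∀ u : Λ, #(T.lev u) < κ) :
    ∃ b : Λ → α, (∀ u : Λ, b u ∈ T.lev u) ∧ ∀ u v : Λ, u < v → T.lt (b u) (b v) := by

  classical
  obtain ⟨hℵ0, hreg, hU⟩ := hsc
  set X := Λ ⊕ κ.out with hXdef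
  have hX : κ ≤ #X := by
    have h := Cardinal.mk_le_of_injective (f := (Sum.inr : κ.out → X))
      Sum.inr_injective
    rwa [Cardinal.mk_out] at h
  set P := {s : Set X // #s < κ} with hP
  obtain ⟨U, hfine, hcomp⟩ := hU X hX
  have hSlt : ∀ s : P, #{u : Λ | Sum.inl u ∈ s.1} < κ := by
    intro s
    refine lt_of_le_of_lt (Cardinal.mk_le_of_injective
      (f := fun x : {u : Λ | Sum.inl u ∈ s.1} => (⟨Sum.inl x.1, x.2⟩ : s.1)) ?_) s.2
    intro a b hab
    apply Subtype.ext
    exact Sum.inl_injective (congrArg Subtype.val hab)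
  choose ub hub using fun s : P => hdir _ (hSlt s)
  choose t ht using fun s : P => T.nonempty (ub s)
  have key : ∀ (u : Λ) (s : P), Sum.inl u ∈ s.1 →
      ∃ r : α, r ∈ T.lev u ∧ (T.lt r (t s) ∨ r = t s) := fun u s h =>
    (T.restrict (t s) (hub s u h) (ht s)).exists
  choose f hf using key
  have exb : ∀ u : Λ, ∃ x, x ∈ T.lev u ∧
      {s : P | ∃ h : Sum.inl u ∈ s.1, f u s h = x} ∈ U := by
    intro u
    by_contra hcon
    push_neg at hcon
    have hmemc : ∀ x : T.lev u,
        {s : P | ∃ h : Sum.inl u ∈ s.1, f u s h = x.1}ᶜ ∈ U := fun x =>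
      (Ultrafilter.compl_mem_iff_notMem).mpr (hcon x.1 x.2)
    set I := Set.range (fun x : T.lev u =>
      {s : P | ∃ h : Sum.inl u ∈ s.1, f u s h = x.1}ᶜ) with hI
    have hIlt : #I < κ := lt_of_le_of_lt Cardinal.mk_range_le (hwidth u)
    have hIU : ⋂₀ I ∈ (U : Filter P) := hcomp I hIlt (by
      rintro A ⟨x, rfl⟩; exact hmemc x)
    obtain ⟨s, hs1, hs2⟩ := Filter.nonempty_of_mem
      (Filter.inter_mem (hfine (Sum.inl u)) hIU)
    have hx : f u s hs1 ∈ T.lev u := (hf u s hs1).1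
    exact hs2 _ ⟨⟨f u s hs1, hx⟩, rfl⟩ ⟨hs1, rfl⟩
  choose b hb hbU using exb
  refine ⟨b, fun u => hb u, ?_⟩
  intro u v huv
  obtain ⟨s, hsu, hsv⟩ := Filter.nonempty_of_mem
    (Filter.inter_mem (hbU u) (hbU v))
  obtain ⟨hu, hfu⟩ := hsu
  obtain ⟨hv, hfv⟩ := hsv
  have hu' : f u s hu ∈ T.lev u := (hf u s hu).1
  have hv' : f v s hv ∈ T.lev v := (hf v s hv).1
  have relu := (hf u s hu).2
  have relv := (hf v s hv).2
  rw [hfu] at hu' relu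
  rw [hfv] at hv' relv
  rcases relv with hltv | heqv
  · have hvub : v < ub s := T.respects hv' (ht s) hltv
    rcases relu with hltu | hequ
    · exact T.treelike huv hvub hu' hv' (ht s) hltu hltv
    · exfalso
      have hne : u ≠ ub s := ne_of_lt (huv.trans hvub)
      exact Set.disjoint_left.mp (T.disj u (ub s) hne) hu'
        (by rw [hequ]; exact ht s)
  · rcases relu with hltu | hequ
    · rw [heqv]; exact hltu
    · exfalso
      exact Set.disjoint_left.mp (T.disj u v (ne_of_lt huv)) hu'
        (by rw [hequ, ← heqv]; exact hv')
end

section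
/- Let g : [X]² → P_κ(X) be a function, where κ is regular uncountable and |X| ≥ κ. Then the set C_g = {x ∈ P_κ(X) : x is infinite and g({a,b}) ⊆ x for all {a,b} ∈ [x]²} is a club (closed and cofinal) in P_κ(X). Conversely, every club C in P_κ(X) contains C_g for some such g. -/
/-!
`C_g` is closed because any two points of a union of a chain already lie in one member of the
chain, and cofinal because closing a set under `g` in `ω` steps keeps it of size `< κ`.

Conversely, let `C` be a club. Choosing, by recursion along `⊂`, a member `H e` of `C` above
each finite `e` and all earlier choices gives a monotone `H` with `e ⊆ H e`. A chain-closed family is closed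
under the directed unions `⋃_{e ⊆ s finite} H e` for `|s| < κ`: write `s` as a well-ordered
increasing union of smaller sets and induct on `|s|`. Fix a bijection `q : X ≃ Finset X`. If
`g' {a, b}` contains `H (q a)` and the codes of `∅`, `{a}` and `q a ∪ q b`, then every infinite
`x` closed under `g'` contains the code of each of its finite subsets `e`, hence `H e`, so
`x = ⋃_{e ⊆ x finite} H e ∈ C`.
-/

open Cardinal

universe u

/-- `C` is closed in `P_κ(X)`: unions of nonempty `⊆`-chains of length `< κ` of elements
of `C` belong to `C`. -/
def ClosedIn {X : Type u} (κ : Cardinal.{u}) (C : Set (Set X)) : Prop :=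
  ∀ D : Set (Set X), D ⊆ C → D.Nonempty → #D < κ → IsChain (· ⊆ ·) D → ⋃₀ D ∈ C

/-- `C` is cofinal in `P_κ(X)`. -/
def CofinalIn {X : Type u} (κ : Cardinal.{u}) (C : Set (Set X)) : Prop :=
  ∀ x : Set X, #x < κ → ∃ y ∈ C, x ⊆ y

/-- `C` is a club in `P_κ(X)`. -/
def IsClubPk {X : Type u} (κ : Cardinal.{u}) (C : Set (Set X)) : Prop :=
  (∀ y ∈ C, #y < κ) ∧ ClosedIn κ C ∧ CofinalIn κ C

open Set

variable {X : Type u} {κ : Cardinal.{u}}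

def ClosedUnderPairs (g : X → X → Set X) (x : Set X) : Prop :=
  ∀ a ∈ x, ∀ b ∈ x, a ≠ b → g a b ⊆ x

def pairClub (κ : Cardinal.{u}) (g : X → X → Set X) : Set (Set X) :=
  {x | x.Infinite ∧ #x < κ ∧ ClosedUnderPairs g x}

theorem mk_iUnion_nat_lt_of_isRegular (hreg : κ.IsRegular) (hunc : ℵ₀ < κ) {S : ℕ → Set X}
    (hS : ∀ n, #(S n) < κ) : #(⋃ n, S n) < κ := by
  rw [← sUnion_range, sUnion_eq_iUnion]
  refine (card_iUnion_lt_iff_forall_of_isRegular hreg ?_).2 fun ⟨_, n, hn⟩ ↦ hn ▸ hS n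
  exact (mk_le_aleph0_iff.2 (countable_range S).to_subtype).trans_lt hunc

theorem closedIn_pairClub (hreg : κ.IsRegular) (g : X → X → Set X) :
    ClosedIn κ (pairClub κ g) := by
  intro D hDC ⟨d₀, hd₀⟩ hDκ hchain
  refine ⟨(hDC hd₀).1.mono (subset_sUnion_of_mem hd₀), ?_, ?_⟩
  · rw [sUnion_eq_iUnion]
    exact (card_iUnion_lt_iff_forall_of_isRegular hreg hDκ).2 fun d ↦ (hDC d.2).2.1
  · rintro a ⟨d₁, hd₁, ha⟩ b ⟨d₂, hd₂, hb⟩ hab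
    obtain ⟨d, hd, had, hbd⟩ : ∃ d ∈ D, a ∈ d ∧ b ∈ d := by
      rcases hchain.total hd₁ hd₂ with h | h
      · exact ⟨d₂, hd₂, h ha, hb⟩
      · exact ⟨d₁, hd₁, ha, h hb⟩
    exact ((hDC hd).2.2 a had b hbd hab).trans (subset_sUnion_of_mem hd)

section PairClosure

variable (g : X → X → Set X)

def pairStep (y : Set X) : Set X :=
  y ∪ ⋃ a ∈ y, ⋃ b ∈ y, g a b

def pairClosure (x : Set X) : Set X :=
  ⋃ n, (pairStep g)^[n] x

theorem monotone_iterate_pairStep (x : Set X) : Monotone fun n ↦ (pairStep g)^[n] x :=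
  monotone_nat_of_le_succ fun n ↦ by
    rw [Function.iterate_succ_apply']
    exact subset_union_left

theorem subset_pairClosure (x : Set X) : x ⊆ pairClosure g x :=
  subset_iUnion (fun n ↦ (pairStep g)^[n] x) 0

theorem closedUnderPairs_pairClosure (x : Set X) : ClosedUnderPairs g (pairClosure g x) := by
  rintro a ha b hb -
  obtain ⟨m, ha⟩ := mem_iUnion.1 ha
  obtain ⟨n, hb⟩ := mem_iUnion.1 hb
  set y := (pairStep g)^[max m n] x
  have hay : a ∈ y := monotone_iterate_pairStep g x (le_max_left m n) ha
  have hby : b ∈ y := monotone_iterate_pairStep g x (le_max_right m n) hb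
  calc g a b ⊆ ⋃ b ∈ y, g a b := subset_biUnion_of_mem hby
    _ ⊆ ⋃ a ∈ y, ⋃ b ∈ y, g a b :=
      subset_biUnion_of_mem (u := fun a ↦ ⋃ b ∈ y, g a b) hay
    _ ⊆ pairStep g y := subset_union_right
    _ = (pairStep g)^[max m n + 1] x := (Function.iterate_succ_apply' _ _ _).symm
    _ ⊆ pairClosure g x := subset_iUnion (fun n ↦ (pairStep g)^[n] x) _

variable {g}

theorem mk_pairStep_lt (hreg : κ.IsRegular) (hg : ∀ a b, #(g a b) < κ) {y : Set X}
    (hy : #y < κ) : #(pairStep g y) < κ := by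
  refine (mk_union_le _ _).trans_lt (add_lt_of_lt hreg.aleph0_le hy ?_)
  refine (card_biUnion_lt_iff_forall_of_isRegular hreg hy).2 fun a _ ↦ ?_
  exact (card_biUnion_lt_iff_forall_of_isRegular hreg hy).2 fun b _ ↦ hg a b

theorem mk_pairClosure_lt (hreg : κ.IsRegular) (hunc : ℵ₀ < κ) (hg : ∀ a b, #(g a b) < κ)
    {x : Set X} (hx : #x < κ) : #(pairClosure g x) < κ := by
  refine mk_iUnion_nat_lt_of_isRegular hreg hunc fun n ↦ ?_
  induction n with
  | zero => exact hx
  | succ n ih =>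
    rw [Function.iterate_succ_apply']
    exact mk_pairStep_lt hreg hg ih

end PairClosure

theorem cofinalIn_pairClub [Infinite X] (hreg : κ.IsRegular) (hunc : ℵ₀ < κ)
    {g : X → X → Set X} (hg : ∀ a b, #(g a b) < κ) : CofinalIn κ (pairClub κ g) := by
  intro x hx
  set t := range (Infinite.natEmbedding X)
  have ht : #t < κ := (mk_le_aleph0_iff.2 (countable_range _).to_subtype).trans_lt hunc
  have hxt : #(x ∪ t : Set X) < κ :=
    (mk_union_le _ _).trans_lt (add_lt_of_lt hreg.aleph0_le hx ht)
  refine ⟨pairClosure g (x ∪ t), ⟨?_, mk_pairClosure_lt hreg hunc hg hxt,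
    closedUnderPairs_pairClosure g _⟩, subset_union_left.trans (subset_pairClosure g _)⟩
  exact (infinite_range_of_injective (Infinite.natEmbedding X).injective).mono
    (subset_union_right.trans (subset_pairClosure g _))

theorem isClubPk_pairClub [Infinite X] (hreg : κ.IsRegular) (hunc : ℵ₀ < κ)
    {g : X → X → Set X} (hg : ∀ a b, #(g a b) < κ) : IsClubPk κ (pairClub κ g) :=
  ⟨fun _ hy ↦ hy.2.1, closedIn_pairClub hreg g, cofinalIn_pairClub hreg hunc hg⟩

theorem ClosedIn.iUnion_mem {C : Set (Set X)} (hC : ClosedIn κ C) {ι : Type u} [LinearOrder ι]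
    [Nonempty ι] (hι : #ι < κ) {c : ι → Set X} (hc : Monotone c) (hcC : ∀ i, c i ∈ C) :
    ⋃ i, c i ∈ C := by
  rw [← sUnion_range]
  exact hC _ (range_subset_iff.2 hcC) (range_nonempty c) (mk_range_le.trans_lt hι)
    hc.isChain_range

theorem exists_monotone_cover_of_infinite {s : Set X} (hs : s.Infinite) :
    ∃ u : (#s).ord.ToType → Set X, Monotone u ∧ (∀ i, u i ⊆ s ∧ #(u i) < #s) ∧
      ∀ e : Finset X, ↑e ⊆ s → ∃ i, ↑e ⊆ u i := by
  obtain ⟨φ⟩ : Nonempty ((#s).ord.ToType ≃ s) := Cardinal.eq.1 (mk_ord_toType _)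
  have := Cardinal.noMaxOrder (aleph0_le_mk_iff.2 hs.to_subtype)
  have : Nonempty (#s).ord.ToType := ⟨φ.symm ⟨_, hs.nonempty.some_mem⟩⟩
  refine ⟨fun i ↦ Subtype.val '' (φ '' Iio i), fun i j hij ↦ image_mono (image_mono
    (Iio_subset_Iio hij)), fun i ↦ ⟨?_, ?_⟩, fun e he ↦ ?_⟩
  · rintro _ ⟨a, -, rfl⟩
    exact a.2
  · exact (mk_image_le.trans mk_image_le).trans_lt
      ((mk_Iio_lt i (by simp)).trans_eq (mk_ord_toType _))
  · obtain ⟨j, hj⟩ := (finite_range fun a : e ↦ φ.symm ⟨a, he a.2⟩).bddAbove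
    obtain ⟨i, hi⟩ := exists_gt j
    exact ⟨i, fun a ha ↦ ⟨φ (φ.symm ⟨a, he ha⟩), ⟨_, (hj ⟨⟨a, ha⟩, rfl⟩).trans_lt hi, rfl⟩,
      by simp⟩⟩

theorem ClosedIn.iUnion_finset_mem {C : Set (Set X)} (hC : ClosedIn κ C)
    {H : Finset X → Set X} (hH : Monotone H) (hHC : ∀ e, H e ∈ C) {s : Set X}
    (hs : #s < κ) : ⋃ (e : Finset X) (_ : ↑e ⊆ s), H e ∈ C := by
  induction hμ : #s using WellFoundedLT.induction generalizing s with
  | ind μ ih =>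
  rcases s.finite_or_infinite with hfin | hinf
  · convert hHC hfin.toFinset using 1
    exact (iUnion₂_subset fun e he ↦ hH (by simpa using he)).antisymm
      (subset_iUnion₂_of_subset hfin.toFinset (by simp) subset_rfl)
  · obtain ⟨u, hu, hus, hcover⟩ := exists_monotone_cover_of_infinite hinf
    obtain ⟨i₀, -⟩ := hcover ∅ (by simp)
    have : Nonempty (#s).ord.ToType := ⟨i₀⟩
    have key := hC.iUnion_mem (c := fun i ↦ ⋃ (e : Finset X) (_ : ↑e ⊆ u i), H e)
      (by rwa [mk_ord_toType])
      (fun i j hij ↦ iUnion₂_mono' fun e he ↦ ⟨e, he.trans (hu hij), subset_rfl⟩)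
      fun i ↦ ih _ (hμ ▸ (hus i).2) ((hus i).2.trans hs) rfl
    convert key using 1
    ext a
    simp only [mem_iUnion]
    constructor
    · rintro ⟨e, he, ha⟩
      obtain ⟨i, hi⟩ := hcover e he
      exact ⟨i, e, hi, ha⟩
    · rintro ⟨i, e, he, ha⟩
      exact ⟨e, he.trans (hus i).1, ha⟩

section SelectAbove

variable (F : Set X → Set X)

def selectAbove (e : Finset X) : Set X :=
  F (↑e ∪ ⋃ e' ∈ {e' | e' ⊂ e}, selectAbove e')
termination_by e.card
decreasing_by exact Finset.card_lt_card ‹_›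

variable {F} {C : Set (Set X)}

theorem selectAbove_mem_and_subset (hreg : κ.IsRegular) (hbd : ∀ y ∈ C, #y < κ)
    (hFC : ∀ s : Set X, #s < κ → F s ∈ C) (hsF : ∀ s : Set X, #s < κ → s ⊆ F s)
    (e : Finset X) :
    selectAbove F e ∈ C ∧
      ↑e ∪ ⋃ e' ∈ {e' | e' ⊂ e}, selectAbove F e' ⊆ selectAbove F e := by
  induction e using Finset.strongInduction with
  | H e ih =>
  have hκ : ℵ₀ ≤ κ := hreg.aleph0_le
  have hfin : {e' | e' ⊂ e}.Finite :=
    e.powerset.finite_toSet.subset fun e' h ↦ Finset.mem_powerset.2 h.subset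
  have hsmall : #(↑e ∪ ⋃ e' ∈ {e' | e' ⊂ e}, selectAbove F e' : Set X) < κ := by
    refine (mk_union_le _ _).trans_lt
      (add_lt_of_lt hκ (e.finite_toSet.lt_aleph0.trans_le hκ) ?_)
    exact (card_biUnion_lt_iff_forall_of_isRegular hreg (hfin.lt_aleph0.trans_le hκ)).2
      fun e' he' ↦ hbd _ (ih e' he').1
  rw [selectAbove]
  exact ⟨hFC _ hsmall, hsF _ hsmall⟩

theorem IsClubPk.exists_monotone_finset_selector (hreg : κ.IsRegular) (hC : IsClubPk κ C) :
    ∃ H : Finset X → Set X, Monotone H ∧ (∀ e, H e ∈ C) ∧ ∀ e, ↑e ⊆ H e := by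
  choose! F hFC hsF using hC.2.2
  have hsel := selectAbove_mem_and_subset hreg hC.1 hFC hsF
  refine ⟨selectAbove F, fun e₁ e₂ h ↦ ?_, fun e ↦ (hsel e).1,
    fun e ↦ subset_union_left.trans (hsel e).2⟩
  rcases h.eq_or_ssubset with rfl | h
  · exact subset_rfl
  · exact (subset_biUnion_of_mem (u := selectAbove F) h).trans
      (subset_union_right.trans (hsel e₂).2)

end SelectAbove

section Coding

variable [DecidableEq X] (q : X ≃ Finset X) (H : Finset X → Set X)

def codingPairFun (a b : X) : Set X :=
  H (q a) ∪ {q.symm ∅, q.symm {a}, q.symm (q a ∪ q b)}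

variable {q H}

theorem symm_mem_of_closedUnderPairs_codingPairFun {x : Set X} (hx : x.Infinite)
    (hcl : ClosedUnderPairs (codingPairFun q H) x) {e : Finset X} (he : ↑e ⊆ x) :
    q.symm e ∈ x := by
  have hpair : ∀ a ∈ x, ∃ b ∈ x, a ≠ b := fun a _ ↦ by
    obtain ⟨b, hb, hba⟩ := hx.exists_notMem_finite (finite_singleton a)
    exact ⟨b, hb, Ne.symm hba⟩
  have hsingleton : ∀ a ∈ x, q.symm {a} ∈ x := fun a ha ↦ by
    obtain ⟨b, hb, hab⟩ := hpair a ha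
    exact hcl a ha b hb hab (by simp [codingPairFun])
  induction e using Finset.induction_on with
  | empty =>
    obtain ⟨a, ha⟩ := hx.nonempty
    obtain ⟨b, hb, hab⟩ := hpair a ha
    exact hcl a ha b hb hab (by simp [codingPairFun])
  | insert a e hae ih =>
    have ha : a ∈ x := he (by simp)
    have hne : q.symm {a} ≠ q.symm e := fun h ↦ hae (by simp [← q.symm.injective h])
    have he' : (↑e : Set X) ⊆ x := (Finset.coe_subset.2 (Finset.subset_insert a e)).trans he
    exact hcl _ (hsingleton a ha) _ (ih he') hne (by simp [codingPairFun])

theorem subset_of_closedUnderPairs_codingPairFun {x : Set X} (hx : x.Infinite)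
    (hcl : ClosedUnderPairs (codingPairFun q H) x) {e : Finset X} (he : ↑e ⊆ x) :
    H e ⊆ x := by
  have hcode := symm_mem_of_closedUnderPairs_codingPairFun hx hcl he
  obtain ⟨b, hb, hba⟩ := hx.exists_notMem_finite (finite_singleton (q.symm e))
  simpa [codingPairFun] using (hcl _ hcode b hb (Ne.symm hba)).trans' subset_union_left

end Coding

theorem IsClubPk.exists_pairClub_subset [Infinite X] (hreg : κ.IsRegular) {C : Set (Set X)}
    (hC : IsClubPk κ C) : ∃ g : X → X → Set X, (∀ a b, #(g a b) < κ) ∧ pairClub κ g ⊆ C := by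
  classical
  obtain ⟨H, hH, hHC, heH⟩ := hC.exists_monotone_finset_selector hreg
  obtain ⟨q⟩ : Nonempty (X ≃ Finset X) := Cardinal.eq.1 (mk_finset_of_infinite X).symm
  refine ⟨codingPairFun q H, fun a b ↦ ?_, fun x ⟨hx, hxκ, hcl⟩ ↦ ?_⟩
  · refine (mk_union_le _ _).trans_lt (add_lt_of_lt hreg.aleph0_le (hC.1 _ (hHC _)) ?_)
    exact (toFinite _).lt_aleph0.trans_le hreg.aleph0_le
  · have hx_eq : x = ⋃ (e : Finset X) (_ : ↑e ⊆ x), H e :=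
      subset_antisymm
        (fun a ha ↦ mem_iUnion₂.2 ⟨{a}, by simpa using ha, heH {a} (by simp)⟩)
        (iUnion₂_subset fun _ he ↦ subset_of_closedUnderPairs_codingPairFun hx hcl he)
    rw [hx_eq]
    exact hC.2.1.iUnion_finset_mem hH hHC hxκ

/-- Menas's characterization of the club filter on `P_κ(X)`: for a function
`g : [X]² → P_κ(X)`, the set `C_g` of infinite `x ∈ P_κ(X)` closed under `g` is a club in
`P_κ(X)`; conversely, every club in `P_κ(X)` contains `C_g` for some such `g`. -/
theorem stmt7 {X : Type u} (κ : Cardinal.{u}) (hreg : κ.IsRegular)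
    (hunc : Cardinal.aleph0 < κ) (hX : κ ≤ #X)
    (g : X → X → Set X) (hg : ∀ a b : X, #(g a b) < κ) :
    IsClubPk κ {x : Set X | x.Infinite ∧ #x < κ ∧ ∀ a ∈ x, ∀ b ∈ x, a ≠ b → g a b ⊆ x} ∧
      ∀ C : Set (Set X), IsClubPk κ C →
        ∃ g' : X → X → Set X, (∀ a b : X, #(g' a b) < κ) ∧
          {x : Set X | x.Infinite ∧ #x < κ ∧ ∀ a ∈ x, ∀ b ∈ x, a ≠ b → g' a b ⊆ x} ⊆ C := by
  have : Infinite X := Cardinal.infinite_iff.2 (hunc.le.trans hX)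
  exact ⟨isClubPk_pairClub hreg hunc hg, fun _ hC ↦ hC.exists_pairClub_subset hreg⟩
end

section
/- Every thin (κ, X)-list is κ-slender. That is, if D = ⟨d_x : x ∈ P_κ(X)⟩ is a (κ, X)-list for which there is a club C ⊆ P_κ(X) with |{d_x ∩ y : y ⊆ x ∈ P_κ(X)}| < κ for every y ∈ C, then for all sufficiently large θ there is a club C' ⊆ P_κ(H(θ)) such that for all M ∈ C' and all y ∈ M ∩ P_κ(X), d_{M∩X} ∩ y ∈ M. -/
/-!
Take `θ` so large that `X ⊆ H(θ)`, and for each small `y ⊆ X` fix a cover `c(y) ∈ C` of `y`.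
Let `C'` consist of the small `M ⊆ H(θ)` which, together with every small `y ⊆ X` in `M`,
contain `c(y)` and all the sets `{z ∈ y | z ∈ s}` for `s` a trace `d_x ∩ c(y)`. By thinness
there are fewer than `κ` such traces, so by regularity `C'` is a club (its members are built
by closing off `ω` times). If `M ∈ C'` and `y ∈ M`, then `c(y) ⊆ M ∩ X`, so `d_{M ∩ X} ∩ c(y)`
is one of the traces, and cutting it down to `y` gives `d_{M ∩ X} ∩ y ∈ M`.
-/

open Cardinal

universe u

/-- `H(θ)`: the class of sets hereditarily of cardinality `< θ`. -/
def Hset (θ : Cardinal.{u + 1}) : Set ZFSet.{u} :=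
  {x : ZFSet.{u} | ZFSet.Hereditarily (fun y => #y.toSet < θ) x}

/-- `C` is a club in `P_κ(A)`: elements are subsets of `A` of size `< κ`, `C` is closed
under unions of nonempty `⊆`-chains of length `< κ`, and `C` is cofinal. -/
def ClubIn (κ : Cardinal.{u + 1}) (A : Set ZFSet.{u}) (C : Set (Set ZFSet.{u})) : Prop :=
  (∀ y ∈ C, y ⊆ A ∧ #y < κ) ∧
    (∀ D : Set (Set ZFSet.{u}), D ⊆ C → D.Nonempty → #D < κ → IsChain (· ⊆ ·) D →
      ⋃₀ D ∈ C) ∧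
    (∀ x : Set ZFSet.{u}, x ⊆ A → #x < κ → ∃ y ∈ C, x ⊆ y)

/-- `S` is stationary in `P_κ(A)`: it meets every club in `P_κ(A)`. -/
def StatIn (κ : Cardinal.{u + 1}) (A : Set ZFSet.{u}) (S : Set (Set ZFSet.{u})) : Prop :=
  (∀ y ∈ S, y ⊆ A ∧ #y < κ) ∧ ∀ C : Set (Set ZFSet.{u}), ClubIn κ A C → (S ∩ C).Nonempty

/-- `d` is `(μ, M)`-approximated (as a subset of `x`): for every `z ∈ M ∩ P_μ(x)` there is
`e ∈ M` with `d ∩ z = e ∩ z`. -/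
def Approx (μ : Cardinal.{u + 1}) (M : Set ZFSet.{u}) (x : ZFSet.{u})
    (d : Set ZFSet.{u}) : Prop :=
  ∀ z : ZFSet.{u}, z ∈ M → z.toSet ⊆ x.toSet → #z.toSet < μ →
    ∃ e ∈ M, d ∩ z.toSet = e.toSet ∩ z.toSet

/-- `d` is `M`-guessed: there is `e ∈ M` with `d ∩ M = e ∩ M`. -/
def Guessed (M : Set ZFSet.{u}) (d : Set ZFSet.{u}) : Prop :=
  ∃ e ∈ M, d ∩ M = e.toSet ∩ M

/-- Every `(μ, M)`-approximated subset of `x` is `M`-guessed. -/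
def GuessingFor (μ : Cardinal.{u + 1}) (M : Set ZFSet.{u}) (x : ZFSet.{u}) : Prop :=
  ∀ d : Set ZFSet.{u}, d ⊆ x.toSet → Approx μ M x d → Guessed M d

/-- The `(κ, X)`-list `d` is `μ`-`Y`-slender: for all sufficiently large `θ` there is a
club `C ⊆ P_κ(H(θ))` such that for all `M ∈ C` with `M ∩ X ∈ Y` and all
`y ∈ M ∩ P_μ(X)`, `d_{M ∩ X} ∩ y ∈ M`. -/
def Slender (μ κ : Cardinal.{u + 1}) (X : Set ZFSet.{u}) (Y : Set (Set ZFSet.{u}))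
    (d : Set ZFSet.{u} → Set ZFSet.{u}) : Prop :=
  ∃ θ₀ : Cardinal.{u + 1}, ∀ θ : Cardinal.{u + 1}, θ₀ ≤ θ →
    ∃ C : Set (Set ZFSet.{u}), ClubIn κ (Hset θ) C ∧
      ∀ M ∈ C, M ∩ X ∈ Y →
        ∀ y : ZFSet.{u}, y ∈ M → y.toSet ⊆ X → #y.toSet < μ →
          ∃ e ∈ M, e.toSet = d (M ∩ X) ∩ y.toSet

/-- `b` is a cofinal branch of the `(κ, X)`-list `d`. -/
def CofBranch (κ : Cardinal.{u + 1}) (X : Set ZFSet.{u})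
    (d : Set ZFSet.{u} → Set ZFSet.{u}) (b : Set ZFSet.{u}) : Prop :=
  b ⊆ X ∧ ∀ x : Set ZFSet.{u}, x ⊆ X → #x < κ →
    ∃ z : Set ZFSet.{u}, z ⊆ X ∧ #z < κ ∧ x ⊆ z ∧ b ∩ x = d z ∩ x

/-- `b` is a `Y`-ineffable branch of the `(κ, X)`-list `d`: the set of `x ∈ Y` with
`b ∩ x = d_x` is stationary in `P_κ(X)`. -/
def IneffBranch (κ : Cardinal.{u + 1}) (X : Set ZFSet.{u}) (Y : Set (Set ZFSet.{u}))
    (d : Set ZFSet.{u} → Set ZFSet.{u}) (b : Set ZFSet.{u}) : Prop :=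
  b ⊆ X ∧ StatIn κ X {x : Set ZFSet.{u} | x ∈ Y ∧ b ∩ x = d x}

theorem ZFSet.Hereditarily.mono {p q : ZFSet.{u} → Prop} (h : ∀ z, p z → q z) {x : ZFSet.{u}}
    (hx : x.Hereditarily p) : x.Hereditarily q := by
  induction x using ZFSet.inductionOn with
  | _ x ih =>
    rw [ZFSet.hereditarily_iff] at hx ⊢
    exact ⟨h _ hx.1, fun y hy => ih y hy (hx.2 y hy)⟩

theorem Hset_mono {θ₁ θ₂ : Cardinal.{u + 1}} (h : θ₁ ≤ θ₂) : Hset θ₁ ⊆ Hset θ₂ :=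
  fun _ hx => ZFSet.Hereditarily.mono (fun _ hz => hz.trans_le h) hx

theorem exists_mem_Hset (x : ZFSet.{u}) : ∃ θ : Cardinal.{u + 1}, x ∈ Hset θ := by
  induction x using ZFSet.inductionOn with
  | _ x ih =>
    choose f hf using fun z : x.toSet => ih z z.2
    refine ⟨Order.succ #x.toSet ⊔ ⨆ z : x.toSet, f z,
      ZFSet.hereditarily_iff.mpr ⟨(Order.lt_succ _).trans_le le_sup_left, fun y hy => ?_⟩⟩
    exact Hset_mono ((le_ciSup bddAbove_of_small ⟨y, hy⟩).trans le_sup_right) (hf ⟨y, hy⟩)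

theorem exists_subset_Hset (X : Set ZFSet.{u}) :
    ∃ θ₀ : Cardinal.{u + 1}, ∀ θ, θ₀ ≤ θ → X ⊆ Hset θ := by
  choose f hf using exists_mem_Hset.{u}
  exact ⟨⨆ x : X, f x, fun θ hθ x hx =>
    Hset_mono ((le_ciSup bddAbove_of_small (⟨x, hx⟩ : X)).trans hθ) (hf x)⟩

theorem mem_Hset_of_toSet_subset {θ : Cardinal.{u + 1}} {x y : ZFSet.{u}} (hy : y ∈ Hset θ)
    (h : x.toSet ⊆ y.toSet) : x ∈ Hset θ :=
  ZFSet.hereditarily_iff.mpr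
    ⟨(mk_le_mk_of_subset h).trans_lt hy.self, fun _ hz => hy.mem (h hz)⟩

section ClosureUnder

variable {κ : Cardinal.{u + 1}} (P : ZFSet.{u} → Prop) (B : ZFSet.{u} → Set ZFSet.{u})

def closureStep (S : Set ZFSet.{u}) : Set ZFSet.{u} :=
  S ∪ ⋃ y ∈ {z ∈ S | P z}, B y

variable {P B}

theorem subset_closureStep (S : Set ZFSet.{u}) : S ⊆ closureStep P B S :=
  Set.subset_union_left

theorem subset_closureStep_of_mem {S : Set ZFSet.{u}} {y : ZFSet.{u}} (hyS : y ∈ S) (hy : P y) :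
    B y ⊆ closureStep P B S :=
  Set.subset_union_of_subset_right
    (Set.subset_biUnion_of_mem (u := B) (show y ∈ {z ∈ S | P z} from ⟨hyS, hy⟩)) _

theorem closureStep_subset {A S : Set ZFSet.{u}} (hBA : ∀ y ∈ A, P y → B y ⊆ A) (hS : S ⊆ A) :
    closureStep P B S ⊆ A :=
  Set.union_subset hS (Set.iUnion₂_subset fun y hy => hBA y (hS hy.1) hy.2)

theorem mk_closureStep_lt (hreg : κ.IsRegular) (hBκ : ∀ y, P y → #(B y) < κ)
    {S : Set ZFSet.{u}} (hS : #S < κ) : #(closureStep P B S) < κ := by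
  have hsep : #{z ∈ S | P z} < κ := (mk_le_mk_of_subset (Set.sep_subset _ _)).trans_lt hS
  refine (mk_union_le _ _).trans_lt (add_lt_of_lt hreg.aleph0_le hS ?_)
  exact (card_biUnion_lt_iff_forall_of_isRegular hreg hsep).2 fun y hy => hBκ y hy.2

theorem exists_closed_superset (hreg : κ.IsRegular) (hunc : ℵ₀ < κ) {A : Set ZFSet.{u}}
    (hBA : ∀ y ∈ A, P y → B y ⊆ A) (hBκ : ∀ y, P y → #(B y) < κ)
    {S : Set ZFSet.{u}} (hSA : S ⊆ A) (hSκ : #S < κ) :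
    ∃ M, S ⊆ M ∧ M ⊆ A ∧ #M < κ ∧ ∀ y ∈ M, P y → B y ⊆ M := by
  set g : ℕ → Set ZFSet.{u} := fun n => (closureStep P B)^[n] S
  have hg_succ (n : ℕ) : g (n + 1) = closureStep P B (g n) :=
    Function.iterate_succ_apply' _ n S
  have hgA (n : ℕ) : g n ⊆ A := by
    induction n with
    | zero => exact hSA
    | succ n ih => rw [hg_succ]; exact closureStep_subset hBA ih
  have hgκ (n : ℕ) : #(g n) < κ := by
    induction n with
    | zero => exact hSκ
    | succ n ih => rw [hg_succ]; exact mk_closureStep_lt hreg hBκ ih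
  refine ⟨⋃ n : ULift.{u + 1} ℕ, g n.down, Set.subset_iUnion_of_subset ⟨0⟩ subset_rfl,
    Set.iUnion_subset fun n => hgA n.down, ?_, ?_⟩
  · exact (card_iUnion_lt_iff_forall_of_isRegular hreg (by simpa using hunc)).2
      fun n => hgκ n.down
  · rintro y hy hPy
    obtain ⟨⟨n⟩, hyn⟩ := Set.mem_iUnion.mp hy
    exact (subset_closureStep_of_mem hyn hPy).trans
      (hg_succ n ▸ Set.subset_iUnion (fun m : ULift.{u + 1} ℕ => g m.down) ⟨n + 1⟩)

theorem clubIn_setOf_closed (hreg : κ.IsRegular) (hunc : ℵ₀ < κ) {A : Set ZFSet.{u}}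
    (hBA : ∀ y ∈ A, P y → B y ⊆ A) (hBκ : ∀ y, P y → #(B y) < κ) :
    ClubIn κ A {M | M ⊆ A ∧ #M < κ ∧ ∀ y ∈ M, P y → B y ⊆ M} := by
  refine ⟨fun M hM => ⟨hM.1, hM.2.1⟩, ?_, fun S hSA hSκ => ?_⟩
  · rintro D hD - hDκ -
    refine ⟨Set.sUnion_subset fun M hM => (hD hM).1, ?_, ?_⟩
    · rw [Set.sUnion_eq_iUnion]
      exact (card_iUnion_lt_iff_forall_of_isRegular hreg hDκ).2 fun M => (hD M.2).2.1
    · rintro y ⟨M, hMD, hyM⟩ hPy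
      exact ((hD hMD).2.2 y hyM hPy).trans (Set.subset_sUnion_of_mem hMD)
  · obtain ⟨M, hSM, hM⟩ := exists_closed_superset hreg hunc hBA hBκ hSA hSκ
    exact ⟨M, hM, hSM⟩

end ClosureUnder

def traces (κ : Cardinal.{u + 1}) (X : Set ZFSet.{u}) (d : Set ZFSet.{u} → Set ZFSet.{u})
    (y : Set ZFSet.{u}) : Set (Set ZFSet.{u}) :=
  {s | ∃ x : Set ZFSet.{u}, x ⊆ X ∧ #x < κ ∧ y ⊆ x ∧ s = d x ∩ y}

theorem inter_mem_traces {κ : Cardinal.{u + 1}} {X : Set ZFSet.{u}}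
    {d : Set ZFSet.{u} → Set ZFSet.{u}} {M c : Set ZFSet.{u}} (hM : #M < κ) (hc : c ⊆ M ∩ X) :
    d (M ∩ X) ∩ c ∈ traces κ X d c :=
  ⟨M ∩ X, Set.inter_subset_right, (mk_le_mk_of_subset Set.inter_subset_left).trans_lt hM,
    hc, rfl⟩

theorem toSet_sep_mem_inter {y : ZFSet.{u}} {s c : Set ZFSet.{u}} (hyc : y.toSet ⊆ c) :
    (ZFSet.sep (· ∈ s ∩ c) y).toSet = s ∩ y.toSet := by
  ext z
  refine ⟨fun hz => ?_, fun ⟨hzs, hzy⟩ => ZFSet.mem_sep.mpr ⟨hzy, hzs, hyc hzy⟩⟩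
  obtain ⟨hzy, hzs, -⟩ := ZFSet.mem_sep.mp hz
  exact ⟨hzs, hzy⟩

theorem stmt10_general (κ : Cardinal.{u + 1}) (hreg : κ.IsRegular)
    (hunc : Cardinal.aleph0 < κ)
    (X : Set ZFSet.{u})
    (d : Set ZFSet.{u} → Set ZFSet.{u})
    (C : Set (Set ZFSet.{u})) (hC : ClubIn κ X C)
    (hthin : ∀ y ∈ C,
      #{s : Set ZFSet.{u} | ∃ x : Set ZFSet.{u}, x ⊆ X ∧ #x < κ ∧ y ⊆ x ∧ s = d x ∩ y} < κ) :
    Slender κ κ X {x : Set ZFSet.{u} | x ⊆ X ∧ #x < κ} d := by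
  obtain ⟨θ₀, hθ₀⟩ := exists_subset_Hset X
  refine ⟨θ₀, fun θ hθ => ?_⟩
  choose! cover hcoverC hcover using hC.2.2
  let P : ZFSet.{u} → Prop := fun y => y.toSet ⊆ X ∧ #y.toSet < κ
  let B : ZFSet.{u} → Set ZFSet.{u} := fun y =>
    cover y.toSet ∪ (fun s => ZFSet.sep (· ∈ s) y) '' traces κ X d (cover y.toSet)
  have hcoverX (y : ZFSet.{u}) (hy : P y) : cover y.toSet ⊆ X := (hC.1 _ (hcoverC _ hy.1 hy.2)).1
  have hBκ (y : ZFSet.{u}) (hy : P y) : #(B y) < κ :=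
    (mk_union_le _ _).trans_lt <| add_lt_of_lt hreg.aleph0_le
      (hC.1 _ (hcoverC _ hy.1 hy.2)).2 (mk_image_le.trans_lt (hthin _ (hcoverC _ hy.1 hy.2)))
  have hBH (y : ZFSet.{u}) (hyH : y ∈ Hset θ) (hy : P y) : B y ⊆ Hset θ := by
    rintro z (hz | ⟨s, -, rfl⟩)
    · exact hθ₀ θ hθ (hcoverX y hy hz)
    · exact mem_Hset_of_toSet_subset hyH fun _ hz => (ZFSet.mem_sep.mp hz).1
  refine ⟨_, clubIn_setOf_closed hreg hunc hBH hBκ, ?_⟩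
  rintro M ⟨-, hMκ, hMB⟩ - y hyM hyX hyκ
  have hBM : B y ⊆ M := hMB y hyM ⟨hyX, hyκ⟩
  have hcM : cover y.toSet ⊆ M ∩ X := fun z hz => ⟨hBM (Or.inl hz), hcoverX y ⟨hyX, hyκ⟩ hz⟩
  exact ⟨_, hBM (Or.inr ⟨_, inter_mem_traces hMκ hcM, rfl⟩),
    toSet_sep_mem_inter (hcover _ hyX hyκ)⟩

/-- Every thin `(κ, X)`-list is `κ`-slender: if there is a club `C ⊆ P_κ(X)` such that
`|{d_x ∩ y : y ⊆ x ∈ P_κ(X)}| < κ` for every `y ∈ C`, then for all sufficiently large `θ`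
there is a club `C' ⊆ P_κ(H(θ))` such that for all `M ∈ C'` and all `y ∈ M ∩ P_κ(X)`,
`d_{M ∩ X} ∩ y ∈ M`. -/
theorem stmt10 (κ : Cardinal.{u + 1}) (hreg : κ.IsRegular)
    (hunc : Cardinal.aleph0 < κ)
    (X : Set ZFSet.{u}) (hX : κ ≤ #X)
    (d : Set ZFSet.{u} → Set ZFSet.{u}) (hd : ∀ x : Set ZFSet.{u}, d x ⊆ x)
    (C : Set (Set ZFSet.{u})) (hC : ClubIn κ X C)
    (hthin : ∀ y ∈ C,
      #{s : Set ZFSet.{u} | ∃ x : Set ZFSet.{u}, x ⊆ X ∧ #x < κ ∧ y ⊆ x ∧ s = d x ∩ y} < κ) :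
    Slender κ κ X {x : Set ZFSet.{u} | x ⊆ X ∧ #x < κ} d :=
  stmt10_general κ hreg hunc X d C hC hthin
end

section
/- Let κ be regular uncountable and λ ≥ κ. Suppose TP(κ, λ) holds (every thin (κ,λ)-list has a cofinal branch). Then for every (κ, λ)-list D = ⟨d_x : x ∈ P_κ(λ)⟩ for which there exists a cofinal set Y ⊆ P_κ(λ) with |{d_x ∩ y : y ⊆ x ∈ P_κ(λ)}| < κ for every y ∈ Y, D has a cofinal branch. In particular, TP⁻(κ, λ) is equivalent to TP(κ, λ). -/
/-!
Thinness along a merely cofinal set `Y` is upgraded to thinness along a club by passing to a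
derived list. Call a trace `s ⊆ y` *stable* if above every `W ∈ Y` covering `y` there is
`z ∈ Y` with `d z ∩ y = s`. The stable traces on `y` are few, since they are all traces of the
thin level `W`, and they are nonempty: otherwise each of the `< κ` traces realized above one
cover `W₀` would be avoided above some cover, and an element of `Y` above all these covers
(there are `< κ` of them, by regularity) would realize none of them. Stable traces restrict to
stable traces, so choosing one on every `x ∈ P_κ(X)` gives a list that is thin on the club of
all of `P_κ(X)`. A cofinal branch of that list is one of `d`, because every stable trace is a
trace of `d`.
-/

open Cardinal

universe u

/-- `C` is a club in `P_κ(X)`. -/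
def IsPkClub {X : Type u} (κ : Cardinal.{u}) (C : Set (Set X)) : Prop :=
  (∀ y ∈ C, #y < κ) ∧
    (∀ D : Set (Set X), D ⊆ C → D.Nonempty → #D < κ → IsChain (· ⊆ ·) D → ⋃₀ D ∈ C) ∧
    (∀ x : Set X, #x < κ → ∃ y ∈ C, x ⊆ y)

/-- The set of traces of a `(κ, X)`-list `d` on `y`:  `{d_x ∩ y : y ⊆ x ∈ P_κ(X)}`. -/
def Traces {X : Type u} (κ : Cardinal.{u}) (d : Set X → Set X) (y : Set X) : Set (Set X) :=
  {s : Set X | ∃ x : Set X, #x < κ ∧ y ⊆ x ∧ s = d x ∩ y}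

/-- `b` is a cofinal branch of the `(κ, X)`-list `d`. -/
def IsCofBranch {X : Type u} (κ : Cardinal.{u}) (d : Set X → Set X) (b : Set X) : Prop :=
  ∀ x : Set X, #x < κ → ∃ z : Set X, #z < κ ∧ x ⊆ z ∧ b ∩ x = d z ∩ x

theorem Cardinal.mk_union_lt_of_lt {α : Type u} {κ : Cardinal.{u}} (hκ : ℵ₀ ≤ κ) {s t : Set α}
    (hs : #s < κ) (ht : #t < κ) : #(s ∪ t : Set α) < κ :=
  (mk_union_le s t).trans_lt (add_lt_of_lt hκ hs ht)

theorem isPkClub_setOf_mk_lt {X : Type u} {κ : Cardinal.{u}} (hκ : κ.IsRegular) :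
    IsPkClub κ {y : Set X | #y < κ} := by
  refine ⟨fun y hy => hy, fun D hD _ hDκ _ => ?_, fun x hx => ⟨x, hx, subset_rfl⟩⟩
  change #(⋃₀ D) < κ
  rw [Set.sUnion_eq_biUnion]
  exact (card_biUnion_lt_iff_forall_of_isRegular hκ hDκ).2 fun y hy => hD hy

section StableTraces

variable {X : Type u} {κ : Cardinal.{u}} (d : Set X → Set X) (Y : Set (Set X))

def tracesAbove (y W : Set X) : Set (Set X) :=
  {s | ∃ z ∈ Y, W ⊆ z ∧ s = d z ∩ y}

def stableTraces (y : Set X) : Set (Set X) :=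
  {s | ∀ W ∈ Y, y ⊆ W → s ∈ tracesAbove d Y y W}

open Classical in
/-- Off `P_κ(X)` no member of `Y` covers `x`, so every set is stable there; the intersection
keeps `stableList d Y x ⊆ x` in that case too. -/
def stableList (x : Set X) : Set X :=
  if h : (stableTraces d Y x).Nonempty then h.some ∩ x else ∅

theorem stableList_subset (x : Set X) : stableList d Y x ⊆ x := by
  unfold stableList
  split_ifs
  exacts [Set.inter_subset_right, Set.empty_subset x]

variable {d Y}

theorem mk_tracesAbove_lt (hYsmall : ∀ z ∈ Y, #z < κ) {y W : Set X} (hyW : y ⊆ W)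
    (hW : #(Traces κ d W) < κ) : #(tracesAbove d Y y W) < κ := by
  have hsub : tracesAbove d Y y W ⊆ (· ∩ y) '' Traces κ d W := by
    rintro _ ⟨z, hzY, hWz, rfl⟩
    refine ⟨d z ∩ W, ⟨z, hYsmall z hzY, hWz, rfl⟩, ?_⟩
    change d z ∩ W ∩ y = d z ∩ y
    rw [Set.inter_assoc, Set.inter_eq_self_of_subset_right hyW]
  exact (mk_le_mk_of_subset hsub).trans_lt (mk_image_le.trans_lt hW)

theorem exists_eq_inter_of_mem_stableTraces (hYsmall : ∀ z ∈ Y, #z < κ) {y W : Set X}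
    (hWY : W ∈ Y) (hyW : y ⊆ W) {s : Set X} (hs : s ∈ stableTraces d Y y) :
    ∃ z : Set X, #z < κ ∧ y ⊆ z ∧ s = d z ∩ y := by
  obtain ⟨z, hzY, hWz, rfl⟩ := hs W hWY hyW
  exact ⟨z, hYsmall z hzY, hyW.trans hWz, rfl⟩

theorem inter_mem_stableTraces (hκ : ℵ₀ ≤ κ) (hYsmall : ∀ z ∈ Y, #z < κ)
    (hYcof : ∀ x : Set X, #x < κ → ∃ y ∈ Y, x ⊆ y) {x x' : Set X} (hx' : #x' < κ)
    (hxx' : x ⊆ x') {s : Set X} (hs : s ∈ stableTraces d Y x') :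
    s ∩ x ∈ stableTraces d Y x := by
  intro W hWY hxW
  obtain ⟨W', hW'Y, hW'⟩ := hYcof (W ∪ x') (mk_union_lt_of_lt hκ (hYsmall W hWY) hx')
  obtain ⟨z, hzY, hW'z, rfl⟩ := hs W' hW'Y (Set.subset_union_right.trans hW')
  refine ⟨z, hzY, (Set.subset_union_left.trans hW').trans hW'z, ?_⟩
  rw [Set.inter_assoc, Set.inter_eq_self_of_subset_right hxx']

variable (hκ : κ.IsRegular) (hYsmall : ∀ z ∈ Y, #z < κ)
  (hYcof : ∀ x : Set X, #x < κ → ∃ y ∈ Y, x ⊆ y) (hthin : ∀ W ∈ Y, #(Traces κ d W) < κ)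
include hκ hYsmall hYcof hthin

theorem stableTraces_nonempty {y : Set X} (hy : #y < κ) : (stableTraces d Y y).Nonempty := by
  obtain ⟨W₀, hW₀Y, hyW₀⟩ := hYcof y hy
  by_contra hempty
  have hunstable : ∀ s ∈ tracesAbove d Y y W₀, ∃ W ∈ Y, y ⊆ W ∧ s ∉ tracesAbove d Y y W := by
    intro s _
    by_contra! hstable
    exact hempty ⟨s, hstable⟩
  choose g hgY _ hg using hunstable
  have hsmall := mk_tracesAbove_lt hYsmall hyW₀ (hthin W₀ hW₀Y)
  have hU : #(W₀ ∪ ⋃ (s) (hs : s ∈ tracesAbove d Y y W₀), g s hs : Set X) < κ :=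
    mk_union_lt_of_lt hκ.aleph0_le (hYsmall W₀ hW₀Y) <|
      (card_biUnion_lt_iff_forall_of_isRegular hκ hsmall).2 fun s hs => hYsmall _ (hgY s hs)
  obtain ⟨W, hWY, hUW⟩ := hYcof _ hU
  have hs : d W ∩ y ∈ tracesAbove d Y y W₀ :=
    ⟨W, hWY, Set.subset_union_left.trans hUW, rfl⟩
  refine hg _ hs ⟨W, hWY, ?_, rfl⟩
  exact (Set.subset_iUnion₂ (s := fun s hs => g s hs) _ hs).trans
    (Set.subset_union_right.trans hUW)

theorem stableList_mem_stableTraces {x : Set X} (hx : #x < κ) :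
    stableList d Y x ∈ stableTraces d Y x := by
  have hne := stableTraces_nonempty hκ hYsmall hYcof hthin hx
  rw [stableList, dif_pos hne]
  exact inter_mem_stableTraces hκ.aleph0_le hYsmall hYcof hx subset_rfl hne.some_mem

theorem traces_stableList_subset {y : Set X} :
    Traces κ (stableList d Y) y ⊆ stableTraces d Y y := by
  rintro _ ⟨x, hx, hyx, rfl⟩
  exact inter_mem_stableTraces hκ.aleph0_le hYsmall hYcof hx hyx
    (stableList_mem_stableTraces hκ hYsmall hYcof hthin hx)

theorem mk_traces_stableList_lt {y : Set X} (hy : #y < κ) :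
    #(Traces κ (stableList d Y) y) < κ := by
  obtain ⟨W, hWY, hyW⟩ := hYcof y hy
  refine (mk_le_mk_of_subset ?_).trans_lt (mk_tracesAbove_lt hYsmall hyW (hthin W hWY))
  exact (traces_stableList_subset hκ hYsmall hYcof hthin).trans fun s hs => hs W hWY hyW

theorem IsCofBranch.of_stableList {b : Set X} (hb : IsCofBranch κ (stableList d Y) b) :
    IsCofBranch κ d b := by
  intro x hx
  obtain ⟨z', hz', hxz', hbz'⟩ := hb x hx
  obtain ⟨W, hWY, hxW⟩ := hYcof x hx
  obtain ⟨z, hz, hxz, hz'z⟩ := exists_eq_inter_of_mem_stableTraces hYsmall hWY hxW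
    (traces_stableList_subset hκ hYsmall hYcof hthin ⟨z', hz', hxz', rfl⟩)
  exact ⟨z, hz, hxz, hbz'.trans hz'z⟩

end StableTraces

theorem stmt11_general {X : Type u} (κ : Cardinal.{u}) (hreg : κ.IsRegular)
    (hTP : ∀ d : Set X → Set X, (∀ x : Set X, d x ⊆ x) →
      (∃ C : Set (Set X), IsPkClub κ C ∧ ∀ y ∈ C, #(Traces κ d y) < κ) →
      ∃ b : Set X, IsCofBranch κ d b)
    (d : Set X → Set X)
    (Y : Set (Set X)) (hYsmall : ∀ y ∈ Y, #y < κ)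
    (hYcof : ∀ x : Set X, #x < κ → ∃ y ∈ Y, x ⊆ y)
    (hthin : ∀ y ∈ Y, #(Traces κ d y) < κ) :
    ∃ b : Set X, IsCofBranch κ d b := by
  obtain ⟨b, hb⟩ := hTP (stableList d Y) (stableList_subset d Y)
    ⟨_, isPkClub_setOf_mk_lt hreg, fun y hy => mk_traces_stableList_lt hreg hYsmall hYcof hthin hy⟩
  exact ⟨b, hb.of_stableList hreg hYsmall hYcof hthin⟩

/-- Answering a question of Fontanella and Matet: if `TP(κ, λ)` holds (every thin
`(κ, λ)`-list has a cofinal branch, thinness being witnessed by a club), then every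
`(κ, λ)`-list whose thinness is witnessed merely by a cofinal set `Y ⊆ P_κ(λ)` has a
cofinal branch.  In particular `TP⁻(κ, λ)` is equivalent to `TP(κ, λ)`.  Here `λ = |X|`. -/
theorem stmt11 {X : Type u} (κ : Cardinal.{u}) (hreg : κ.IsRegular)
    (hunc : Cardinal.aleph0 < κ) (hX : κ ≤ #X)
    (hTP : ∀ d : Set X → Set X, (∀ x : Set X, d x ⊆ x) →
      (∃ C : Set (Set X), IsPkClub κ C ∧ ∀ y ∈ C, #(Traces κ d y) < κ) →
      ∃ b : Set X, IsCofBranch κ d b)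
    (d : Set X → Set X) (hd : ∀ x : Set X, d x ⊆ x)
    (Y : Set (Set X)) (hYsmall : ∀ y ∈ Y, #y < κ)
    (hYcof : ∀ x : Set X, #x < κ → ∃ y ∈ Y, x ⊆ y)
    (hthin : ∀ y ∈ Y, #(Traces κ d y) < κ) :
    ∃ b : Set X, IsCofBranch κ d b :=
  stmt11_general κ hreg hTP d Y hYsmall hYcof hthin
end

section
/- Let μ ≤ κ ≤ θ be regular uncountable cardinals and Y ⊆ P_κ(H(θ)) stationary. If ISP_Y(μ, κ, H(θ)) holds (every μ-Y-slender (κ, H(θ))-list has a Y-ineffable branch), then GMP_Y(μ, κ, θ) holds: the set of M ∈ Y that are μ-guessing models is stationary in P_κ(H(θ)). -/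
open Cardinal

universe u

/-- The first-order language with a single binary relation symbol (for `∈`). -/
def L : FirstOrder.Language :=
  { Functions := fun _ => Empty
    Relations := fun n => match n with | 2 => PUnit | _ => Empty }

/-- The `∈`-structure on a set `A` of ZFC sets. -/
def setStructure (A : Set ZFSet.{u}) : L.Structure A where
  funMap := fun f _ => f.elim
  RelMap := fun {n} r v =>
    match n, r, v with
    | 0, r, _ => r.elim
    | 1, r, _ => r.elim
    | 2, _, v => (v 0 : ZFSet.{u}) ∈ (v 1 : ZFSet.{u})
    | _ + 3, r, _ => r.elim

/-- Realization of a first-order `∈`-formula in the structure `(A, ∈)`. -/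
def RealizeIn (A : Set ZFSet.{u}) {n : ℕ} (φ : L.Formula (Fin n)) (v : Fin n → A) : Prop :=
  letI := setStructure A
  φ.Realize v

/-- `M ≺ A` as `∈`-structures: `M ⊆ A` and every first-order formula with parameters from
`M` holds in `(M, ∈)` iff it holds in `(A, ∈)`. -/
def ElemIn (M A : Set ZFSet.{u}) : Prop :=
  M ⊆ A ∧ ∀ (n : ℕ) (φ : L.Formula (Fin n)) (v : Fin n → ZFSet.{u})
    (hM : ∀ i, v i ∈ M) (hA : ∀ i, v i ∈ A),
      (RealizeIn M φ fun i => ⟨v i, hM i⟩) ↔ (RealizeIn A φ fun i => ⟨v i, hA i⟩)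

/-!
If stationarily many models in `Y` fail to be `μ`-guessing, each such `M` has an unguessed
`(μ, M)`-approximated `A_M ⊆ x_M ∈ M`. Code these witnesses into the list
`d_M = ({(0, x_M)} ∪ {(1, a) : a ∈ A_M}) ∩ M`. It is slender: for a model closed under a few
rudimentary operations and a small `y` in it, `d_M ∩ y` is computed from `A_M ∩ z` for a small
`z ∈ M`, which approximation puts in `M`. So the list has an ineffable branch `b`. Take one model
`M₀` where `b` agrees with the list, and then another one, `N`, that contains the tag `(0, x_{M₀})`
and `e = {a ∈ x_{M₀} : (1, a) ∈ b}`. The tag forces `x_N = x_{M₀}`, and then `e` guesses `A_N`.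
-/

namespace ZFSet

@[simp]
theorem toSet_eq_coe (x : ZFSet.{u}) : x.toSet = (x : Set ZFSet.{u}) := rfl

def fiber (c y : ZFSet.{u}) : ZFSet.{u} :=
  ZFSet.sep (fun t => pair c t ∈ y) (⋃₀ ⋃₀ y)

theorem doubleton_mem_pair (c t : ZFSet.{u}) : ({c, t} : ZFSet) ∈ pair c t := by
  simp [pair]

@[simp]
theorem mem_fiber {c y t : ZFSet.{u}} : t ∈ fiber c y ↔ pair c t ∈ y := by
  refine mem_sep.trans ⟨And.right, fun h => ⟨?_, h⟩⟩
  exact mem_sUnion_of_mem (mem_pair.2 (Or.inr rfl))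
    (mem_sUnion_of_mem (doubleton_mem_pair c t) h)

theorem mk_fiber_le (c y : ZFSet.{u}) : #(fiber c y).toSet ≤ #y.toSet :=
  mk_le_of_injective
    (f := fun t : (fiber c y).toSet => (⟨pair c t, mem_fiber.1 t.2⟩ : y.toSet))
    fun _ _ h => Subtype.ext (pair_injective (congrArg Subtype.val h)).2

theorem mk_prod_le (a b : ZFSet.{u}) : #(prod a b).toSet ≤ #a.toSet * #b.toSet := by
  rw [mul_def]
  refine mk_le_of_surjective (f := fun p : a.toSet × b.toSet =>
    (⟨pair p.1 p.2, pair_mem_prod.2 ⟨p.1.2, p.2.2⟩⟩ : (prod a b).toSet)) ?_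
  rintro ⟨z, hz⟩
  obtain ⟨x, hx, y, hy, rfl⟩ := mem_prod.1 hz
  exact ⟨(⟨x, hx⟩, ⟨y, hy⟩), rfl⟩

end ZFSet

open ZFSet

section Hset

variable {θ : Cardinal.{u + 1}} {a b x y : ZFSet.{u}}

theorem mem_Hset_iff : x ∈ Hset θ ↔ #x.toSet < θ ∧ ∀ y ∈ x, y ∈ Hset θ :=
  hereditarily_iff

theorem mem_Hset_of_mem (hx : x ∈ Hset θ) (hy : y ∈ x) : y ∈ Hset θ :=
  Hereditarily.mem hx hy

theorem mem_Hset_of_subset (hx : x ∈ Hset θ) (h : y ⊆ x) : y ∈ Hset θ :=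
  mem_Hset_iff.2 ⟨(mk_le_mk_of_subset h).trans_lt (mem_Hset_iff.1 hx).1,
    fun _ hz => mem_Hset_of_mem hx (h hz)⟩

theorem fiber_mem_Hset (hb : b ∈ Hset θ) : fiber a b ∈ Hset θ := by
  refine mem_Hset_iff.2 ⟨(mk_fiber_le a b).trans_lt (mem_Hset_iff.1 hb).1, fun t ht => ?_⟩
  have hp := mem_Hset_of_mem hb (mem_fiber.1 ht)
  exact mem_Hset_of_mem (mem_Hset_of_mem hp (doubleton_mem_pair a t))
    (mem_pair.2 (Or.inr rfl))

theorem empty_mem_Hset (hθ : ℵ₀ ≤ θ) : (∅ : ZFSet.{u}) ∈ Hset θ :=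
  mem_Hset_iff.2 ⟨by simpa using aleph0_pos.trans_le hθ, by simp⟩

theorem insert_mem_Hset (hθ : ℵ₀ ≤ θ) (ha : a ∈ Hset θ) (hb : b ∈ Hset θ) :
    insert a b ∈ Hset θ := by
  refine mem_Hset_iff.2 ⟨?_, fun c hc => ?_⟩
  · simp only [toSet_eq_coe, coe_insert]
    exact mk_insert_le.trans_lt
      (add_lt_of_lt hθ (mem_Hset_iff.1 hb).1 (one_lt_aleph0.trans_le hθ))
  · rcases mem_insert_iff.1 hc with rfl | hc
    exacts [ha, mem_Hset_of_mem hb hc]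

theorem pair_mem_Hset (hθ : ℵ₀ ≤ θ) (ha : a ∈ Hset θ) (hb : b ∈ Hset θ) :
    pair a b ∈ Hset θ := by
  have hs : ∀ {c}, c ∈ Hset θ → ({c} : ZFSet) ∈ Hset θ :=
    fun hc => insert_mem_Hset hθ hc (empty_mem_Hset hθ)
  exact insert_mem_Hset hθ (hs ha) (hs (insert_mem_Hset hθ ha (hs hb)))

theorem prod_mem_Hset (hθ : ℵ₀ ≤ θ) (ha : a ∈ Hset θ) (hb : b ∈ Hset θ) :
    prod a b ∈ Hset θ := by
  refine mem_Hset_iff.2 ⟨(mk_prod_le a b).trans_lt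
    (mul_lt_of_lt hθ (mem_Hset_iff.1 ha).1 (mem_Hset_iff.1 hb).1), fun z hz => ?_⟩
  obtain ⟨x, hx, y, hy, rfl⟩ := mem_prod.1 hz
  exact pair_mem_Hset hθ (mem_Hset_of_mem ha hx) (mem_Hset_of_mem hb hy)

end Hset

theorem mk_sUnion_lt {α : Type*} {κ : Cardinal} (hκ : κ.IsRegular) {D : Set (Set α)}
    (hD : #D < κ) (h : ∀ M ∈ D, #M < κ) : #(⋃₀ D) < κ := by
  rw [Set.sUnion_eq_iUnion]
  exact (card_iUnion_lt_iff_forall_of_isRegular hκ hD).2 fun M => h M M.2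

theorem mk_iUnion_nat_lt {α : Type*} {κ : Cardinal} (hκ : κ.IsRegular) (hℵκ : ℵ₀ < κ)
    {f : ℕ → Set α} (h : ∀ n, #(f n) < κ) : #(⋃ n, f n) < κ := by
  rw [← Set.sUnion_range]
  exact mk_sUnion_lt hκ ((Set.countable_range f).le_aleph0.trans_lt hℵκ) (by simpa using h)

section Club

variable {κ : Cardinal.{u + 1}} {A : Set ZFSet.{u}}

theorem ClubIn.iUnion_mem {C : Set (Set ZFSet.{u})} (hC : ClubIn κ A C) (hℵκ : ℵ₀ < κ)
    {f : ℕ → Set ZFSet.{u}} (hf : Monotone f) (hfC : ∀ n, f n ∈ C) : ⋃ n, f n ∈ C := by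
  rw [← Set.sUnion_range]
  exact hC.2.1 _ (Set.range_subset_iff.2 hfC) (Set.range_nonempty f)
    ((Set.countable_range f).le_aleph0.trans_lt hℵκ) hf.isChain_range

theorem ClubIn.inter (hℵκ : ℵ₀ < κ) {C C' : Set (Set ZFSet.{u})} (hC : ClubIn κ A C)
    (hC' : ClubIn κ A C') : ClubIn κ A (C ∩ C') := by
  refine ⟨fun M hM => hC.1 M hM.1, fun D hDC hD hDκ hch =>
    ⟨hC.2.1 D (fun M hM => (hDC hM).1) hD hDκ hch,
      hC'.2.1 D (fun M hM => (hDC hM).2) hD hDκ hch⟩, fun x hxA hxκ => ?_⟩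
  choose! F hFC hF using hC.2.2
  choose! F' hF'C hF' using hC'.2.2
  have hstep : ∀ {s}, s ⊆ A ∧ #↥s < κ → F s ∈ C ∧ s ⊆ F s ∧ F' (F s) ∈ C' ∧ F s ⊆ F' (F s) :=
    fun hs => have h := hC.1 _ (hFC _ hs.1 hs.2)
      ⟨hFC _ hs.1 hs.2, hF _ hs.1 hs.2, hF'C _ h.1 h.2, hF' _ h.1 h.2⟩
  -- the sequences `F (g n) ∈ C` and `g (n + 1) ∈ C'` interleave, so they have the same union
  let g : ℕ → Set ZFSet.{u} := fun n => Nat.rec x (fun _ s => F' (F s)) n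
  have hg : ∀ n, g n ⊆ A ∧ #↥(g n) < κ := by
    intro n
    induction n with
    | zero => exact ⟨hxA, hxκ⟩
    | succ n ih => exact hC'.1 _ (hstep ih).2.2.1
  have hgF : ∀ n, g n ⊆ F (g n) := fun n => (hstep (hg n)).2.1
  have hFg : ∀ n, F (g n) ⊆ g (n + 1) := fun n => (hstep (hg n)).2.2.2
  have hU : ⋃ n, F (g n) = ⋃ n, g (n + 1) :=
    (Set.iUnion_mono hFg).antisymm
      (Set.iUnion_subset fun n =>
        (hgF (n + 1)).trans (Set.subset_iUnion (fun n => F (g n)) (n + 1)))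
  refine ⟨⋃ n, F (g n), ⟨?_, ?_⟩, (hgF 0).trans (Set.subset_iUnion (fun n => F (g n)) 0)⟩
  · exact hC.iUnion_mem hℵκ (monotone_nat_of_le_succ fun n => (hFg n).trans (hgF (n + 1)))
      fun n => (hstep (hg n)).1
  · rw [hU]
    exact hC'.iUnion_mem hℵκ
      (monotone_nat_of_le_succ fun n => (hgF (n + 1)).trans (hFg (n + 1)))
      fun n => (hstep (hg n)).2.2.1

theorem clubIn_of_chain_closed (hκ : κ.IsRegular) {P : Set ZFSet.{u} → Prop}
    (hchain : ∀ D : Set (Set ZFSet.{u}), D.Nonempty → IsChain (· ⊆ ·) D → (∀ M ∈ D, P M) →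
      P (⋃₀ D))
    (hcof : ∀ x ⊆ A, #x < κ → ∃ M, x ⊆ M ∧ M ⊆ A ∧ #M < κ ∧ P M) :
    ClubIn κ A {M | M ⊆ A ∧ #M < κ ∧ P M} := by
  refine ⟨fun M hM => ⟨hM.1, hM.2.1⟩, fun D hDC hD hDκ hch => ⟨?_, ?_, ?_⟩,
    fun x hxA hxκ => ?_⟩
  · exact Set.sUnion_subset fun M hM => (hDC hM).1
  · exact mk_sUnion_lt hκ hDκ fun M hM => (hDC hM).2.1
  · exact hchain D hD hch fun M hM => (hDC hM).2.2
  · obtain ⟨M, hxM, hM⟩ := hcof x hxA hxκ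
    exact ⟨M, hM, hxM⟩

end Club

section Closure

variable {κ : Cardinal.{u + 1}} {A R : Set ZFSet.{u}}
  {G : ZFSet.{u} → ZFSet.{u} → Set ZFSet.{u}}

def ClosedUnder (G : ZFSet.{u} → ZFSet.{u} → Set ZFSet.{u}) (M : Set ZFSet.{u}) : Prop :=
  ∀ a ∈ M, ∀ b ∈ M, G a b ⊆ M

theorem ClosedUnder.sUnion {D : Set (Set ZFSet.{u})} (hch : IsChain (· ⊆ ·) D)
    (hD : ∀ M ∈ D, ClosedUnder G M) : ClosedUnder G (⋃₀ D) := by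
  rintro a ⟨M, hM, ha⟩ b ⟨M', hM', hb⟩
  rcases hch.total hM hM' with h | h
  · exact (hD M' hM' a (h ha) b hb).trans (Set.subset_sUnion_of_mem hM')
  · exact (hD M hM a ha b (h hb)).trans (Set.subset_sUnion_of_mem hM)

theorem exists_closedUnder_superset (hκ : κ.IsRegular) (hℵκ : ℵ₀ < κ)
    (hGA : ∀ a ∈ A, ∀ b ∈ A, G a b ⊆ A) (hGκ : ∀ a ∈ A, ∀ b ∈ A, #(G a b) < κ)
    {x : Set ZFSet.{u}} (hxA : x ⊆ A) (hxκ : #x < κ) :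
    ∃ M, x ⊆ M ∧ M ⊆ A ∧ #M < κ ∧ ClosedUnder G M := by
  let step : Set ZFSet.{u} → Set ZFSet.{u} := fun s => s ∪ ⋃ a ∈ s, ⋃ b ∈ s, G a b
  let g : ℕ → Set ZFSet.{u} := fun n => step^[n] x
  have hg_succ : ∀ n, g (n + 1) = step (g n) := fun n => Function.iterate_succ_apply' step n x
  have hg : ∀ n, g n ⊆ A ∧ #↥(g n) < κ := by
    intro n
    induction n with
    | zero => exact ⟨hxA, hxκ⟩
    | succ n ih =>
      rw [hg_succ]
      refine ⟨Set.union_subset ih.1 (Set.iUnion₂_subset fun a ha => Set.iUnion₂_subset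
        fun b hb => hGA a (ih.1 ha) b (ih.1 hb)), ?_⟩
      refine (mk_union_le _ _).trans_lt (add_lt_of_lt hκ.aleph0_le ih.2 ?_)
      refine (card_biUnion_lt_iff_forall_of_isRegular hκ ih.2).2 fun a ha => ?_
      exact (card_biUnion_lt_iff_forall_of_isRegular hκ ih.2).2 fun b hb =>
        hGκ a (ih.1 ha) b (ih.1 hb)
  have hmono : Monotone g :=
    monotone_nat_of_le_succ fun n => (hg_succ n).symm ▸ Set.subset_union_left
  refine ⟨⋃ n, g n, Set.subset_iUnion g 0, Set.iUnion_subset fun n => (hg n).1,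
    mk_iUnion_nat_lt hκ hℵκ fun n => (hg n).2, ?_⟩
  rintro a ha b hb
  obtain ⟨i, ha⟩ := Set.mem_iUnion.1 ha
  obtain ⟨j, hb⟩ := Set.mem_iUnion.1 hb
  refine Set.Subset.trans ?_ (Set.subset_iUnion g (max i j + 1))
  rw [hg_succ]
  refine Set.subset_union_of_subset_right ?_ _
  exact (Set.subset_biUnion_of_mem (u := G a) (hmono (le_max_right i j) hb)).trans
    (Set.subset_biUnion_of_mem (u := fun a => ⋃ b ∈ g (max i j), G a b)
      (hmono (le_max_left i j) ha))

theorem clubIn_closedUnder (hκ : κ.IsRegular) (hℵκ : ℵ₀ < κ)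
    (hGA : ∀ a ∈ A, ∀ b ∈ A, G a b ⊆ A) (hGκ : ∀ a ∈ A, ∀ b ∈ A, #(G a b) < κ)
    (hRA : R ⊆ A) (hRκ : #R < κ) :
    ClubIn κ A {M | M ⊆ A ∧ #M < κ ∧ (R ⊆ M ∧ ClosedUnder G M)} := by
  refine clubIn_of_chain_closed hκ (fun D ⟨M, hM⟩ hch hD =>
    ⟨(hD M hM).1.trans (Set.subset_sUnion_of_mem hM),
      ClosedUnder.sUnion hch fun M hM => (hD M hM).2⟩) fun x hxA hxκ => ?_
  obtain ⟨M, hxM, hMA, hMκ, hM⟩ := exists_closedUnder_superset hκ hℵκ hGA hGκ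
    (Set.union_subset hxA hRA) ((mk_union_le x R).trans_lt (add_lt_of_lt hκ.aleph0_le hxκ hRκ))
  exact ⟨M, Set.subset_union_left.trans hxM, hMA, hMκ, Set.subset_union_right.trans hxM, hM⟩

end Closure

section Elementary

open FirstOrder Language

attribute [local instance] setStructure

instance (n : ℕ) : Countable (L.Functions n) := inferInstanceAs (Countable Empty)

instance (n : ℕ) : Countable (L.Relations n) := by
  rcases n with _ | _ | _ | n
  exacts [inferInstanceAs (Countable Empty), inferInstanceAs (Countable Empty),
    inferInstanceAs (Countable PUnit), inferInstanceAs (Countable Empty)]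

theorem card_L_le_aleph0 : L.card ≤ ℵ₀ := by
  have : Countable L.Symbols := by unfold Language.Symbols; infer_instance
  exact mk_le_aleph0

def inducedSubstructure (A M : Set ZFSet.{u}) : L.Substructure A :=
  ⟨Subtype.val ⁻¹' M, fun f => f.elim⟩

def inducedEquiv {A M : Set ZFSet.{u}} (h : M ⊆ A) : M ≃[L] inducedSubstructure A M where
  toFun z := ⟨⟨z, h z.2⟩, z.2⟩
  invFun s := ⟨s.1, s.2⟩
  map_fun' f := f.elim
  map_rel' {n} r _ := by
    match n, r with
    | 2, _ => exact Iff.rfl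

theorem elemIn_iff_isElementary {A M : Set ZFSet.{u}} (h : M ⊆ A) :
    ElemIn M A ↔ (inducedSubstructure A M).IsElementary := by
  refine ⟨fun hM n φ x => ?_, fun hM => ⟨h, fun n φ v hvM hvA => ?_⟩⟩
  · have := hM.2 n φ (fun i => (x i).1) (fun i => (x i).2) (fun i => (x i).1.2)
    rw [RealizeIn, RealizeIn, ← StrongHomClass.realize_formula (inducedEquiv h)] at this
    exact this.symm
  · rw [RealizeIn, ← StrongHomClass.realize_formula (inducedEquiv h)]
    exact (hM φ _).symm

theorem ElemIn.sUnion {A : Set ZFSet.{u}} {D : Set (Set ZFSet.{u})} (hD : D.Nonempty)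
    (hch : IsChain (· ⊆ ·) D) (hDA : ∀ M ∈ D, ElemIn M A) : ElemIn (⋃₀ D) A := by
  classical
  have hsub : ⋃₀ D ⊆ A := Set.sUnion_subset fun M hM => (hDA M hM).1
  refine (elemIn_iff_isElementary hsub).2 (Substructure.isElementary_of_exists _ ?_)
  intro n φ x a ha
  -- all parameters lie in a single member `M` of the chain, which is elementary in `A`
  choose m hm using fun i => Set.mem_sUnion.1 (x i).2
  have : Nonempty D := hD.to_subtype
  obtain ⟨⟨M, hMD⟩, hM⟩ := (IsChain.directed (f := id) hch).finset_le
    (Finset.univ.image fun i => (⟨m i, (hm i).1⟩ : D))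
  have hxM : ∀ i, ((x i : A) : ZFSet.{u}) ∈ M := fun i =>
    hM _ (Finset.mem_image_of_mem _ (Finset.mem_univ i)) (hm i).2
  let E := (⟨inducedSubstructure A M,
    (elemIn_iff_isElementary (hDA M hMD).1).1 (hDA M hMD)⟩ : L.ElementarySubstructure A).subtype
  let x' : Fin n → inducedSubstructure A M := fun i => ⟨x i, hxM i⟩
  have hdef : (E ∘ default : Empty → A) = default := Subsingleton.elim _ _
  have hex := (E.map_boundedFormula φ.ex default x').1 (by
    rw [hdef, BoundedFormula.realize_ex]
    exact ⟨a, ha⟩)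
  obtain ⟨b, hb⟩ := BoundedFormula.realize_ex.1 hex
  refine ⟨⟨b, Set.mem_sUnion_of_mem b.2 hMD⟩, ?_⟩
  have := (E.map_boundedFormula φ default (Fin.snoc x' b)).2 hb
  rwa [hdef, Fin.comp_snoc] at this

theorem exists_elemIn_superset {κ : Cardinal.{u + 1}} (hℵκ : ℵ₀ < κ) {A x : Set ZFSet.{u}}
    (hxA : x ⊆ A) (hxκ : #x < κ) : ∃ M, x ⊆ M ∧ M ⊆ A ∧ #M < κ ∧ ElemIn M A := by
  rcases lt_or_ge #A κ with hAκ | hκA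
  · exact ⟨A, hxA, subset_rfl, hAκ, subset_rfl, fun _ _ _ _ _ => Iff.rfl⟩
  let s : Set A := Subtype.val ⁻¹' x
  have hs : #s ≤ #x := mk_preimage_of_injective _ _ Subtype.val_injective
  obtain ⟨S, hsS, hS⟩ :=
    exists_elementarySubstructure_card_eq L s (max #s ℵ₀) (le_max_right _ _) (by simp)
    (by simp [card_L_le_aleph0])
    (by simpa using ⟨hs.trans (hxκ.le.trans hκA), hℵκ.le.trans hκA⟩)
  have hSκ : #S < κ := by
    rw [lift_id, lift_id] at hS
    exact hS.trans_lt (max_lt (hs.trans_lt hxκ) hℵκ)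
  have hSM : inducedSubstructure A (Subtype.val '' (S : Set A)) = S := by
    ext a
    exact Subtype.val_injective.mem_set_image
  refine ⟨Subtype.val '' (S : Set A), fun a ha => ⟨⟨a, hxA ha⟩, hsS ha, rfl⟩,
    Set.image_subset_iff.2 fun a _ => a.2, mk_image_le.trans_lt hSκ, ?_⟩
  rw [elemIn_iff_isElementary (Set.image_subset_iff.2 fun a _ => a.2), hSM]
  exact S.isElementary

theorem clubIn_elemIn {κ : Cardinal.{u + 1}} (hκ : κ.IsRegular) (hℵκ : ℵ₀ < κ)
    (A : Set ZFSet.{u}) : ClubIn κ A {M | M ⊆ A ∧ #M < κ ∧ ElemIn M A} :=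
  clubIn_of_chain_closed hκ (fun _ hD hch hDA => ElemIn.sUnion hD hch hDA)
    fun _ hxA hxκ => exists_elemIn_superset hℵκ hxA hxκ

end Elementary

section CodingOps

variable {μ κ θ : Cardinal.{u + 1}}

def codingOps (μ : Cardinal.{u + 1}) (a b : ZFSet.{u}) : Set ZFSet.{u} :=
  {a ∩ b, insert a b, pair a b, fiber a b, prod a b} ∪ {c ∈ a.toSet | #a.toSet < μ}

theorem codingOps_subset_Hset (hθ : ℵ₀ ≤ θ) {a b : ZFSet.{u}} (ha : a ∈ Hset θ)
    (hb : b ∈ Hset θ) : codingOps μ a b ⊆ Hset θ := by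
  rintro c ((rfl | rfl | rfl | rfl | rfl) | ⟨hc, -⟩)
  · exact mem_Hset_of_subset ha fun _ hc => (mem_inter.1 hc).1
  · exact insert_mem_Hset hθ ha hb
  · exact pair_mem_Hset hθ ha hb
  · exact fiber_mem_Hset hb
  · exact prod_mem_Hset hθ ha hb
  · exact mem_Hset_of_mem ha hc

theorem mk_codingOps_lt (hκ : ℵ₀ ≤ κ) (hμκ : μ ≤ κ) (a b : ZFSet.{u}) :
    #(codingOps μ a b) < κ := by
  refine (mk_union_le _ _).trans_lt
    (add_lt_of_lt hκ ((Set.toFinite _).lt_aleph0.trans_le hκ) ?_)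
  by_cases ha : #a.toSet < μ
  · exact (mk_le_mk_of_subset (Set.sep_subset _ _)).trans_lt (ha.trans_le hμκ)
  · rw [Set.sep_eq_empty_iff_mem_false.2 fun _ _ => ha, mk_eq_zero]
    exact aleph0_pos.trans_le hκ

theorem clubIn_closedUnder_codingOps (hκ : κ.IsRegular) (hℵκ : ℵ₀ < κ) (hμκ : μ ≤ κ)
    (hθ : ℵ₀ ≤ θ) {R : Set ZFSet.{u}} (hR : R ⊆ Hset θ) (hRκ : #R < κ) :
    ClubIn κ (Hset θ)
      {M | M ⊆ Hset θ ∧ #M < κ ∧ (R ⊆ M ∧ ClosedUnder (codingOps μ) M)} :=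
  clubIn_closedUnder hκ hℵκ (fun _ ha _ hb => codingOps_subset_Hset hθ ha hb)
    (fun a _ b _ => mk_codingOps_lt hκ.aleph0_le hμκ a b) hR hRκ

namespace ClosedUnder

variable {M : Set ZFSet.{u}} {a b : ZFSet.{u}}

theorem inter_mem (hM : ClosedUnder (codingOps μ) M) (ha : a ∈ M) (hb : b ∈ M) : a ∩ b ∈ M :=
  hM a ha b hb (by simp [codingOps])

theorem insert_mem (hM : ClosedUnder (codingOps μ) M) (ha : a ∈ M) (hb : b ∈ M) :
    insert a b ∈ M :=
  hM a ha b hb (by simp [codingOps])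

theorem pair_mem (hM : ClosedUnder (codingOps μ) M) (ha : a ∈ M) (hb : b ∈ M) :
    pair a b ∈ M :=
  hM a ha b hb (by simp [codingOps])

theorem fiber_mem (hM : ClosedUnder (codingOps μ) M) (ha : a ∈ M) (hb : b ∈ M) :
    fiber a b ∈ M :=
  hM a ha b hb (by simp [codingOps])

theorem prod_mem (hM : ClosedUnder (codingOps μ) M) (ha : a ∈ M) (hb : b ∈ M) :
    prod a b ∈ M :=
  hM a ha b hb (by simp [codingOps])

theorem toSet_subset (hM : ClosedUnder (codingOps μ) M) (ha : a ∈ M) (haμ : #a.toSet < μ) :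
    a.toSet ⊆ M :=
  fun _ hc => hM a ha a ha (Or.inr ⟨hc, haμ⟩)

end ClosedUnder

end CodingOps

section Code

def code (x : ZFSet.{u}) (A : Set ZFSet.{u}) : Set ZFSet.{u} :=
  insert (pair ∅ x) (pair {∅} '' A)

theorem singleton_empty_ne_empty : ({∅} : ZFSet.{u}) ≠ ∅ :=
  fun h => (eq_empty _).1 h ∅ (mem_singleton.2 rfl)

theorem pair_empty_mem_code {x x' : ZFSet.{u}} {A : Set ZFSet.{u}} :
    pair ∅ x' ∈ code x A ↔ x' = x := by
  simp [code, singleton_empty_ne_empty]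

theorem pair_singleton_mem_code {x a : ZFSet.{u}} {A : Set ZFSet.{u}} :
    pair {∅} a ∈ code x A ↔ a ∈ A := by
  simp [code, singleton_empty_ne_empty]

theorem exists_eq_code_inter {μ θ : Cardinal.{u + 1}} {M : Set ZFSet.{u}}
    (hM : ClosedUnder (codingOps μ) M) (hempty : ∅ ∈ M) {x y : ZFSet.{u}} {A : Set ZFSet.{u}}
    (hx : x ∈ M ∩ Hset θ) (hAx : A ⊆ x.toSet) (hA : Approx μ (M ∩ Hset θ) x A) (hy : y ∈ M)
    (hyμ : #y.toSet < μ) : ∃ e ∈ M, e.toSet = code x A ∩ y.toSet := by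
  have h1 : ({∅} : ZFSet.{u}) ∈ M := by simpa using hM.insert_mem hempty hempty
  -- approximation applied to the small `z = {a ∈ x | (1, a) ∈ y} ∈ M` gives `A ∩ y` in `M`
  set z := x ∩ fiber {∅} y
  have hzx : z.toSet ⊆ x.toSet := fun _ h => (mem_inter.1 h).1
  have hz : z ∈ M ∩ Hset θ :=
    ⟨hM.inter_mem hx.1 (hM.fiber_mem h1 hy), mem_Hset_of_subset hx.2 hzx⟩
  have hzμ : #z.toSet < μ := (mk_le_mk_of_subset fun _ h => (mem_inter.1 h).2).trans_lt
    ((mk_fiber_le _ _).trans_lt hyμ)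
  obtain ⟨e', he'M, he'⟩ := hA z hz hzx hzμ
  have htM : prod {{∅}} (e' ∩ z) ∈ M :=
    hM.prod_mem (by simpa using hM.insert_mem h1 hempty) (hM.inter_mem he'M.1 hz.1)
  have hw : ∀ a, a ∈ e' ∩ z ↔ a ∈ A ∧ pair {∅} a ∈ y := fun a => by
    have h := Set.ext_iff.1 he' a
    simp only [Set.mem_inter_iff, toSet_eq_coe, SetLike.mem_coe, z, mem_inter, mem_fiber] at h ⊢
    exact ⟨fun h' => ⟨(h.2 h').1, h'.2.2⟩, fun h' => h.1 ⟨h'.1, hAx h'.1, h'.2⟩⟩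
  have ht : (prod {{∅}} (e' ∩ z)).toSet = pair {∅} '' A ∩ y.toSet := by
    ext p
    simp only [toSet_eq_coe, SetLike.mem_coe, mem_prod, mem_singleton, exists_eq_left, hw]
    aesop
  by_cases hp : pair ∅ x ∈ y
  · refine ⟨insert (pair ∅ x) (prod {{∅}} (e' ∩ z)),
      hM.insert_mem (hM.pair_mem hempty hx.1) htM, ?_⟩
    simp only [toSet_eq_coe] at ht ⊢
    rw [code, Set.insert_inter_of_mem (SetLike.mem_coe.2 hp), ← ht, coe_insert]
  · refine ⟨_, htM, ?_⟩
    simp only [toSet_eq_coe] at ht ⊢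
    rw [code, Set.insert_inter_of_notMem (mt SetLike.mem_coe.1 hp), ht]

end Code

section Main

variable {μ κ θ : Cardinal.{u + 1}}

theorem guessed_of_branch {N b A : Set ZFSet.{u}} {x x₀ : ZFSet.{u}}
    (hN : ClosedUnder (codingOps μ) N) (hempty : ∅ ∈ N) (hAx : A ⊆ x.toSet)
    (hbN : b ∩ N = code x A ∩ N) (hx₀ : pair ∅ x₀ ∈ b ∩ N)
    (he : ZFSet.sep (fun a => pair {∅} a ∈ b) x₀ ∈ N) : Guessed N A := by
  have hx : x₀ = x := pair_empty_mem_code.1 (hbN ▸ hx₀).1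
  subst hx
  have h1 : ({∅} : ZFSet.{u}) ∈ N := by simpa using hN.insert_mem hempty hempty
  have hb : ∀ a ∈ N, pair {∅} a ∈ b ↔ a ∈ A := fun a haN => by
    simpa [hN.pair_mem h1 haN, pair_singleton_mem_code] using Set.ext_iff.1 hbN (pair {∅} a)
  refine ⟨_, he, Set.ext fun a => ⟨fun ⟨ha, haN⟩ => ⟨?_, haN⟩, fun ⟨ha, haN⟩ => ⟨?_, haN⟩⟩⟩
  · exact mem_sep.2 ⟨hAx ha, (hb a haN).2 ha⟩
  · exact (hb a haN).1 (mem_sep.1 ha).2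

open Classical in
def codeList (S : Set (Set ZFSet.{u})) (x : Set ZFSet.{u} → ZFSet.{u})
    (A : Set ZFSet.{u} → Set ZFSet.{u}) (M : Set ZFSet.{u}) : Set ZFSet.{u} :=
  if M ∈ S then code (x M) (A M) ∩ M else ∅

theorem codeList_subset (S : Set (Set ZFSet.{u})) (x : Set ZFSet.{u} → ZFSet.{u})
    (A : Set ZFSet.{u} → Set ZFSet.{u}) (M : Set ZFSet.{u}) : codeList S x A M ⊆ M := by
  unfold codeList
  split_ifs
  exacts [Set.inter_subset_right, Set.empty_subset M]

theorem slender_codeList (hκ : κ.IsRegular) (hℵκ : ℵ₀ < κ) (hμκ : μ ≤ κ) (hθ : ℵ₀ ≤ θ)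
    (Y S : Set (Set ZFSet.{u})) {x : Set ZFSet.{u} → ZFSet.{u}}
    {A : Set ZFSet.{u} → Set ZFSet.{u}}
    (hS : ∀ M ∈ S, x M ∈ M ∧ A M ⊆ (x M).toSet ∧ Approx μ M (x M) (A M)) :
    Slender μ κ (Hset θ) Y (codeList S x A) := by
  refine ⟨θ, fun θ' hθ' => ⟨_, clubIn_closedUnder_codingOps hκ hℵκ hμκ (hθ.trans hθ')
    (Set.singleton_subset_iff.2 (empty_mem_Hset (hθ.trans hθ')))
    ((Set.finite_singleton _).lt_aleph0.trans_le hκ.aleph0_le), ?_⟩⟩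
  rintro M ⟨-, -, hR, hM⟩ - y hy hyX hyμ
  by_cases hMS : M ∩ Hset θ ∈ S
  · obtain ⟨hxM, hAx, hA⟩ := hS _ hMS
    obtain ⟨e, heM, he⟩ := exists_eq_code_inter hM (hR rfl) hxM hAx hA hy hyμ
    have hyM : y.toSet ⊆ M ∩ Hset θ := fun t ht => ⟨hM.toSet_subset hy hyμ ht, hyX ht⟩
    rw [codeList, if_pos hMS, Set.inter_assoc, Set.inter_eq_right.2 hyM]
    exact ⟨e, heM, he⟩
  · exact ⟨∅, hR rfl, by simp [codeList, hMS]⟩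

theorem not_forall_exists_approx_not_guessed (hκ : κ.IsRegular) (hℵκ : ℵ₀ < κ) (hμκ : μ ≤ κ)
    (hθ : ℵ₀ ≤ θ) {Y : Set (Set ZFSet.{u})}
    (hISP : ∀ d : Set ZFSet.{u} → Set ZFSet.{u}, (∀ x : Set ZFSet.{u}, d x ⊆ x) →
      Slender μ κ (Hset θ) Y d → ∃ b : Set ZFSet.{u}, IneffBranch κ (Hset θ) Y d b)
    {C : Set (Set ZFSet.{u})} (hC : ClubIn κ (Hset θ) C) :
    ¬ ∀ M ∈ Y ∩ C, ∃ x ∈ M, ∃ A ⊆ x.toSet, Approx μ M x A ∧ ¬ Guessed M A := by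
  intro hbad
  choose! x hxM A hAx hA hAg using hbad
  obtain ⟨b, -, hb⟩ := hISP _ (codeList_subset (Y ∩ C) x A)
    (slender_codeList hκ hℵκ hμκ hθ Y (Y ∩ C) fun M hM => ⟨hxM M hM, hAx M hM, hA M hM⟩)
  have hmeet : ∀ R ⊆ Hset θ, R.Finite → ∃ M ∈ Y ∩ C, ∅ ∈ M ∧ R ⊆ M ∧
      ClosedUnder (codingOps μ) M ∧ b ∩ M = code (x M) (A M) ∩ M := by
    intro R hR hRfin
    obtain ⟨M, ⟨hMY, hbM⟩, hMC, -, -, hRM, hM⟩ := hb.2 _ (hC.inter hℵκ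
      (clubIn_closedUnder_codingOps hκ hℵκ hμκ hθ (Set.insert_subset (empty_mem_Hset hθ) hR)
        ((hRfin.insert ∅).lt_aleph0.trans_le hκ.aleph0_le)))
    refine ⟨M, ⟨hMY, hMC⟩, hRM (Set.mem_insert _ _), (Set.subset_insert _ _).trans hRM, hM, ?_⟩
    rwa [codeList, if_pos ⟨hMY, hMC⟩] at hbM
  obtain ⟨M₀, hM₀, hempty₀, -, hM₀cl, hbM₀⟩ := hmeet ∅ (Set.empty_subset _) Set.finite_empty
  have hx₀ : pair ∅ (x M₀) ∈ b := by
    have : pair ∅ (x M₀) ∈ code (x M₀) (A M₀) ∩ M₀ :=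
      ⟨pair_empty_mem_code.2 rfl, hM₀cl.pair_mem hempty₀ (hxM M₀ hM₀)⟩
    exact (hbM₀ ▸ this).1
  have hx₀H : x M₀ ∈ Hset θ := (hC.1 M₀ hM₀.2).1 (hxM M₀ hM₀)
  let e := ZFSet.sep (fun a => pair {∅} a ∈ b) (x M₀)
  have hR : {pair ∅ (x M₀), e} ⊆ Hset θ :=
    Set.insert_subset (pair_mem_Hset hθ (empty_mem_Hset hθ) hx₀H)
      (Set.singleton_subset_iff.2 (mem_Hset_of_subset hx₀H sep_subset))
  obtain ⟨N, hN, hemptyN, hRN, hNcl, hbN⟩ := hmeet _ hR (Set.toFinite _)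
  exact hAg N hN (guessed_of_branch hNcl hemptyN (hAx N hN) hbN ⟨hx₀, hRN (Set.mem_insert _ _)⟩
    (hRN (Set.mem_insert_of_mem _ rfl)))

end Main

theorem stmt12_general (μ κ θ : Cardinal.{u + 1})
    (hκreg : κ.IsRegular) (hθreg : θ.IsRegular)
    (hμunc : Cardinal.aleph0 < μ) (hμκ : μ ≤ κ)
    (Y : Set (Set ZFSet.{u})) (hY : StatIn κ (Hset θ) Y)
    (hISP : ∀ d : Set ZFSet.{u} → Set ZFSet.{u}, (∀ x : Set ZFSet.{u}, d x ⊆ x) →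
      Slender μ κ (Hset θ) Y d → ∃ b : Set ZFSet.{u}, IneffBranch κ (Hset θ) Y d b) :
    StatIn κ (Hset θ)
      {M : Set ZFSet.{u} | M ∈ Y ∧ ElemIn M (Hset θ) ∧ ∀ x ∈ M, GuessingFor μ M x} := by
  have hℵκ : ℵ₀ < κ := hμunc.trans_le hμκ
  refine ⟨fun M hM => hY.1 M hM.1, fun C hC => ?_⟩
  by_contra hempty
  refine not_forall_exists_approx_not_guessed hκreg hℵκ hμκ hθreg.aleph0_le hISP
    (hC.inter hℵκ (clubIn_elemIn hκreg hℵκ (Hset θ))) ?_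
  rintro M ⟨hMY, hMC, -, -, hMel⟩
  have hM : ¬ ∀ x ∈ M, GuessingFor μ M x := fun h => hempty ⟨M, ⟨hMY, hMel, h⟩, hMC⟩
  simpa only [GuessingFor, not_forall, exists_prop] using hM

/-- If `μ ≤ κ ≤ θ` are regular uncountable, `Y ⊆ P_κ(H(θ))` is stationary, and
`ISP_Y(μ, κ, H(θ))` holds (every `μ`-`Y`-slender `(κ, H(θ))`-list has a `Y`-ineffable
branch), then `GMP_Y(μ, κ, θ)` holds: the set of `M ∈ Y` that are `μ`-guessing models
is stationary in `P_κ(H(θ))`. -/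
theorem stmt12 (μ κ θ : Cardinal.{u + 1})
    (hμreg : μ.IsRegular) (hκreg : κ.IsRegular) (hθreg : θ.IsRegular)
    (hμunc : Cardinal.aleph0 < μ) (hμκ : μ ≤ κ) (hκθ : κ ≤ θ)
    (Y : Set (Set ZFSet.{u})) (hY : StatIn κ (Hset θ) Y)
    (hISP : ∀ d : Set ZFSet.{u} → Set ZFSet.{u}, (∀ x : Set ZFSet.{u}, d x ⊆ x) →
      Slender μ κ (Hset θ) Y d → ∃ b : Set ZFSet.{u}, IneffBranch κ (Hset θ) Y d b) :
    StatIn κ (Hset θ)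
      {M : Set ZFSet.{u} | M ∈ Y ∧ ElemIn M (Hset θ) ∧ ∀ x ∈ M, GuessingFor μ M x} :=
  stmt12_general μ κ θ hκreg hθreg hμunc hμκ Y hY hISP
end
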